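/- arXiv:2407.15193 — 5 statements merged into one kernel-verified Lean document; each statement's English description precedes it below -/
import Mathlib

section
/- Let H be a 2-connected finite simple graph with |V(H)| ≥ 4, mepl(H) ≥ 2, and H not isomorphic to J4. Then there exists an edge e = (u,v) ∈ E(H) with the following property: whenever a graph A is the union of two subgraphs X and Y, each isomorphic to H, with V(X) ∩ V(Y) = {u,v} and E(X) ∩ E(Y) = {(u,v)} (i.e., A is obtained from two disjoint copies of H by identifying the edge e of each copy), every subgraph of A isomorphic to H is equal to X or to Y. -/
open SimpleGraph

/-- A graph is 2-connected if it has more than 2 vertices and remains connected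
after the deletion of any single vertex. -/
def TwoConnected {V : Type*} [Fintype V] (G : SimpleGraph V) : Prop :=
  2 < Fintype.card V ∧ ∀ v : V, (SimpleGraph.induce {u | u ≠ v} G).Connected

/-- The edge pair linkage of a pair of edges `e, f` of `G`: the number of edges of `G`
sharing a vertex with both `e` and `f`.  (This is only used for vertex-disjoint
pairs `e, f`, where it coincides with the number of edges adjacent to both.) -/
noncomputable def epl {V : Type*} (G : SimpleGraph V) (e f : Sym2 V) : ℕ :=
  {g ∈ G.edgeSet | (∃ v, v ∈ g ∧ v ∈ e) ∧ (∃ v, v ∈ g ∧ v ∈ f)}.ncard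

/-- `J4`: the complete graph on 4 vertices with one edge removed. -/
def J4 : SimpleGraph (Fin 4) :=
  (⊤ : SimpleGraph (Fin 4)) \ SimpleGraph.fromEdgeSet {s((0 : Fin 4), (1 : Fin 4))}

set_option linter.unusedSectionVars false

namespace Stmt1Aux

variable {V : Type*} [Fintype V] {H : SimpleGraph V}

lemma exists_ne_ne (h : 3 ≤ Fintype.card V) (x y : V) : ∃ z, z ≠ x ∧ z ≠ y := by
  haveI := Classical.decEq V
  by_contra hc
  push_neg at hc
  have hsub : (Finset.univ : Finset V) ⊆ {x, y} := fun z _ => by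
    rcases eq_or_ne z x with h' | h'
    · simp [h']
    · simp [hc z h']
  have h1 := Finset.card_le_card hsub
  have h2 : ({x, y} : Finset V).card ≤ 2 := (Finset.card_insert_le _ _).trans (by simp)
  rw [Finset.card_univ] at h1
  omega

lemma nbr_of_induce_connected {s : Set V} (hconn : (SimpleGraph.induce s H).Connected)
    {x y : V} (hx : x ∈ s) (hy : y ∈ s) (hxy : x ≠ y) :
    ∃ r, r ∈ s ∧ H.Adj x r := by
  obtain ⟨p⟩ := hconn.preconnected ⟨x, hx⟩ ⟨y, hy⟩
  have hnil : ¬ p.Nil := SimpleGraph.Walk.not_nil_of_ne (by simp [hxy])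
  have hadj := p.adj_snd hnil
  exact ⟨(p.getVert 1 : V), (p.getVert 1).2, by simpa using hadj⟩

lemma two_nbrs (h2 : TwoConnected H) (hcard : 4 ≤ Fintype.card V) (x : V) :
    ∃ r₁ r₂, r₁ ≠ r₂ ∧ H.Adj x r₁ ∧ H.Adj x r₂ := by
  have h3 : 3 ≤ Fintype.card V := by omega
  obtain ⟨z, hz, -⟩ := exists_ne_ne h3 x x
  obtain ⟨w, hw1, hw2⟩ := exists_ne_ne h3 x z
  obtain ⟨r₁, hr₁s, hr₁⟩ := nbr_of_induce_connected (h2.2 z)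
    (show x ∈ {u | u ≠ z} from Ne.symm hz) (show w ∈ {u | u ≠ z} from hw2) (Ne.symm hw1)
  obtain ⟨w', hw'1, hw'2⟩ := exists_ne_ne h3 x r₁
  obtain ⟨r₂, hr₂s, hr₂⟩ := nbr_of_induce_connected (h2.2 r₁)
    (show x ∈ {u | u ≠ r₁} from hr₁.ne) (show w' ∈ {u | u ≠ r₁} from hw'2) (Ne.symm hw'1)
  exact ⟨r₂, r₁, hr₂s, hr₂, hr₁⟩


lemma key {W : Type*}
    (hmepl : ∀ e ∈ H.edgeSet, ∀ f ∈ H.edgeSet,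
      (∀ v : V, ¬(v ∈ e ∧ v ∈ f)) → 2 ≤ epl H e f)
    {A : SimpleGraph W} {Z : A.Subgraph} (θ : Z.coe ≃g H)
    {p₁ p₂ q₁ q₂ : W} (h₁ : Z.Adj p₁ p₂) (h₂ : Z.Adj q₁ q₂)
    (d11 : p₁ ≠ q₁) (d12 : p₁ ≠ q₂) (d21 : p₂ ≠ q₁) (d22 : p₂ ≠ q₂) :
    ∃ r₁ r₂ r₃ r₄ : W, Z.Adj r₁ r₂ ∧ Z.Adj r₃ r₄ ∧
      (r₁ = p₁ ∨ r₁ = p₂) ∧ (r₂ = q₁ ∨ r₂ = q₂) ∧ (r₃ = p₁ ∨ r₃ = p₂) ∧ (r₄ = q₁ ∨ r₄ = q₂) ∧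
      s(r₁, r₂) ≠ s(r₃, r₄) := by
  haveI := Classical.decEq V
  have hp₁ : p₁ ∈ Z.verts := h₁.fst_mem
  have hp₂ : p₂ ∈ Z.verts := h₁.snd_mem
  have hq₁ : q₁ ∈ Z.verts := h₂.fst_mem
  have hq₂ : q₂ ∈ Z.verts := h₂.snd_mem
  set P₁ := θ ⟨p₁, hp₁⟩ with hP₁
  set P₂ := θ ⟨p₂, hp₂⟩ with hP₂
  set Q₁ := θ ⟨q₁, hq₁⟩ with hQ₁
  set Q₂ := θ ⟨q₂, hq₂⟩ with hQ₂
  have hf : s(P₁, P₂) ∈ H.edgeSet := by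
    rw [SimpleGraph.mem_edgeSet]
    exact θ.map_rel_iff.mpr h₁
  have hg : s(Q₁, Q₂) ∈ H.edgeSet := by
    rw [SimpleGraph.mem_edgeSet]
    exact θ.map_rel_iff.mpr h₂
  have hval : ∀ (x y : W) (hx : x ∈ Z.verts) (hy : y ∈ Z.verts),
      θ ⟨x, hx⟩ = θ ⟨y, hy⟩ → x = y := by
    intro x y hx hy h
    exact congrArg Subtype.val (θ.toEquiv.injective h)
  have hdisj : ∀ z : V, ¬(z ∈ s(P₁, P₂) ∧ z ∈ s(Q₁, Q₂)) := by
    rintro z ⟨hz1, hz2⟩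
    rw [Sym2.mem_iff] at hz1 hz2
    rcases hz1 with rfl | rfl <;> rcases hz2 with h | h
    · exact d11 (hval _ _ _ _ h)
    · exact d12 (hval _ _ _ _ h)
    · exact d21 (hval _ _ _ _ h)
    · exact d22 (hval _ _ _ _ h)
  have h2le := hmepl _ hf _ hg hdisj
  rw [epl] at h2le
  have hfin : {g ∈ H.edgeSet | (∃ v, v ∈ g ∧ v ∈ s(P₁, P₂)) ∧ (∃ v, v ∈ g ∧ v ∈ s(Q₁, Q₂))}.Finite :=
    Set.toFinite _
  obtain ⟨e₁, he₁, e₂, he₂, hne⟩ := (Set.one_lt_ncard hfin).mp (by omega)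
  -- analysis of a connecting edge
  have pull : ∀ e ∈ {g ∈ H.edgeSet | (∃ v, v ∈ g ∧ v ∈ s(P₁, P₂)) ∧ (∃ v, v ∈ g ∧ v ∈ s(Q₁, Q₂))},
      ∃ (r₁ r₂ : W) (hr₁ : r₁ ∈ Z.verts) (hr₂ : r₂ ∈ Z.verts), Z.Adj r₁ r₂ ∧
        (r₁ = p₁ ∨ r₁ = p₂) ∧ (r₂ = q₁ ∨ r₂ = q₂) ∧ e = s(θ ⟨r₁, hr₁⟩, θ ⟨r₂, hr₂⟩) := by
    rintro e ⟨heE, ⟨z, hze, hzf⟩, ⟨z', hz'e, hz'g⟩⟩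
    have hzz' : z ≠ z' := by
      rintro rfl
      exact hdisj z ⟨hzf, hz'g⟩
    have he : e = s(z, z') := ((Sym2.mem_and_mem_iff hzz').mp ⟨hze, hz'e⟩)
    have hadj : H.Adj z z' := by rw [he] at heE; exact heE
    rw [Sym2.mem_iff] at hzf hz'g
    rcases hzf with rfl | rfl <;> rcases hz'g with rfl | rfl
    · exact ⟨p₁, q₁, hp₁, hq₁, θ.map_rel_iff.mp hadj, Or.inl rfl, Or.inl rfl, he⟩
    · exact ⟨p₁, q₂, hp₁, hq₂, θ.map_rel_iff.mp hadj, Or.inl rfl, Or.inr rfl, he⟩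
    · exact ⟨p₂, q₁, hp₂, hq₁, θ.map_rel_iff.mp hadj, Or.inr rfl, Or.inl rfl, he⟩
    · exact ⟨p₂, q₂, hp₂, hq₂, θ.map_rel_iff.mp hadj, Or.inr rfl, Or.inr rfl, he⟩
  obtain ⟨r₁, r₂, hr₁, hr₂, hA, m1, m2, hE1⟩ := pull e₁ he₁
  obtain ⟨r₃, r₄, hr₃, hr₄, hB, m3, m4, hE2⟩ := pull e₂ he₂
  refine ⟨r₁, r₂, r₃, r₄, hA, hB, m1, m2, m3, m4, ?_⟩
  intro hs
  apply hne
  rw [hE1, hE2]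
  rw [Sym2.eq_iff] at hs ⊢
  rcases hs with ⟨h1, h2⟩ | ⟨h1, h2⟩
  · subst h1; subst h2; exact Or.inl ⟨rfl, rfl⟩
  · subst h1; subst h2; exact Or.inr ⟨rfl, rfl⟩

lemma eq_of_subset {W : Type*} {A : SimpleGraph W} {Z X : A.Subgraph}
    (θ : Z.coe ≃g H) (φ : H ≃g X.coe)
    (hv : Z.verts ⊆ X.verts) (hadj : ∀ p q, Z.Adj p q → X.Adj p q) : Z = X := by
  haveI := Classical.decEq V
  haveI : Finite ↥X.verts := Finite.of_equiv V φ.toEquiv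
  haveI : Finite ↥Z.verts := Finite.of_equiv V θ.toEquiv.symm
  have hXfin : X.verts.Finite := Set.toFinite _
  have hcards : X.verts.ncard = Z.verts.ncard := by
    rw [← Nat.card_coe_set_eq, ← Nat.card_coe_set_eq]
    exact Nat.card_congr (φ.toEquiv.symm.trans θ.toEquiv.symm)
  have hveq : Z.verts = X.verts := Set.eq_of_subset_of_ncard_le hv hcards.le hXfin
  have hEsub : Z.edgeSet ⊆ X.edgeSet := by
    intro e
    induction e using Sym2.ind with
    | _ p q => exact fun he => hadj p q he
  have hEcn : ∀ (Y : A.Subgraph) (ι : H ≃g Y.coe), Y.edgeSet.ncard = H.edgeSet.ncard := by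
    intro Y ι
    rw [← SimpleGraph.Subgraph.image_coe_edgeSet_coe,
      Set.ncard_image_of_injective _ (Sym2.map.injective Subtype.val_injective),
      ← Nat.card_coe_set_eq, ← Nat.card_coe_set_eq]
    exact Nat.card_congr (ι.mapEdgeSet).symm
  have hEfin : X.edgeSet.Finite := by
    rw [← SimpleGraph.Subgraph.image_coe_edgeSet_coe]
    have : X.coe.edgeSet.Finite := by
      haveI : Finite ↥(H.edgeSet) := Set.toFinite _
      haveI : Finite ↥(X.coe.edgeSet) := Finite.of_equiv _ (φ.mapEdgeSet)
      exact Set.toFinite _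
    exact this.image _
  have hEcard : X.edgeSet.ncard = Z.edgeSet.ncard := by
    rw [hEcn X φ, hEcn Z θ.symm]
  have hEeq : Z.edgeSet = X.edgeSet := Set.eq_of_subset_of_ncard_le hEsub hEcard.le hEfin
  have hAdj : ∀ p q, Z.Adj p q ↔ X.Adj p q := by
    intro p q
    rw [← SimpleGraph.Subgraph.mem_edgeSet, ← SimpleGraph.Subgraph.mem_edgeSet, hEeq]
  exact SimpleGraph.Subgraph.ext hveq (by funext p q; exact propext (hAdj p q))

lemma contra
    (hmepl : ∀ e ∈ H.edgeSet, ∀ f ∈ H.edgeSet,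
      (∀ v : V, ¬(v ∈ e ∧ v ∈ f)) → 2 ≤ epl H e f)
    (hJ4 : ¬ Nonempty (H ≃g J4))
    (hmin2 : ∀ x : V, ∃ r₁ r₂, r₁ ≠ r₂ ∧ H.Adj x r₁ ∧ H.Adj x r₂)
    {u v : V} (huv : H.Adj u v)
    (hmin : ∀ u' v', H.Adj u' v' →
      (H.neighborSet u ∩ H.neighborSet v).ncard ≤ (H.neighborSet u' ∩ H.neighborSet v').ncard)
    {W : Type*} {A : SimpleGraph W} {X Y : A.Subgraph}
    (φ : H ≃g X.coe) (ψ : H ≃g Y.coe)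
    (hsup : X ⊔ Y = ⊤)
    {a b : W} (hau : (↑(φ u) : W) = a) (hav : (↑(φ v) : W) = b)
    (hbu : (↑(ψ u) : W) = a) (hbv : (↑(ψ v) : W) = b)
    (hverts : X.verts ∩ Y.verts = {a, b})
    {Z : A.Subgraph} (θ : Z.coe ≃g H)
    (hnoT : ∀ p q : W, p ∈ Y.verts → p ≠ a → p ≠ b → q ∈ Y.verts → q ≠ a → q ≠ b → ¬ Z.Adj p q)
    {w₀ : W} (hw₀Z : w₀ ∈ Z.verts) (hw₀Y : w₀ ∈ Y.verts) (hw₀a : w₀ ≠ a) (hw₀b : w₀ ≠ b)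
    {x₀ : W} (hx₀Z : x₀ ∈ Z.verts) (hx₀X : x₀ ∈ X.verts) (hx₀a : x₀ ≠ a) (hx₀b : x₀ ≠ b) :
    False := by
  haveI := Classical.decEq V
  -- basic facts
  have hab : a ≠ b := by
    rw [← hau, ← hav]
    intro h
    exact huv.ne (φ.toEquiv.injective (Subtype.ext h))
  have haX : a ∈ X.verts := hau ▸ (φ u).2
  have hbX : b ∈ X.verts := hav ▸ (φ v).2
  have haY : a ∈ Y.verts := hbu ▸ (ψ u).2
  have hbY : b ∈ Y.verts := hbv ▸ (ψ v).2
  have hXY : ∀ p : W, p ∈ X.verts → p ∈ Y.verts → p = a ∨ p = b := by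
    intro p h1 h2
    have : p ∈ X.verts ∩ Y.verts := ⟨h1, h2⟩
    rw [hverts] at this
    simpa using this
  have hcover : ∀ p : W, p ∈ X.verts ∨ p ∈ Y.verts := by
    intro p
    have h1 : p ∈ (⊤ : A.Subgraph).verts := by simp [SimpleGraph.Subgraph.verts_top]
    rw [← hsup] at h1
    simpa [SimpleGraph.Subgraph.verts_sup] using h1
  have hAclass : ∀ {p q : W}, A.Adj p q → X.Adj p q ∨ Y.Adj p q := by
    intro p q h
    have h1 : (⊤ : A.Subgraph).Adj p q := SimpleGraph.Subgraph.top_adj.mpr h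
    rw [← hsup] at h1
    exact SimpleGraph.Subgraph.sup_adj.mp h1
  have hnocross : ∀ {p q : W}, p ∈ X.verts → p ≠ a → p ≠ b →
      q ∈ Y.verts → q ≠ a → q ≠ b → ¬ Z.Adj p q := by
    intro p q hpX hpa hpb hqY hqa hqb hadj
    rcases hAclass (Z.adj_sub hadj) with h | h
    · rcases hXY q h.snd_mem hqY with rfl | rfl
      · exact hqa rfl
      · exact hqb rfl
    · rcases hXY p hpX h.fst_mem with rfl | rfl
      · exact hpa rfl
      · exact hpb rfl
  have hZmin2 : ∀ p : W, p ∈ Z.verts → ∃ r₁ r₂ : W, r₁ ≠ r₂ ∧ Z.Adj p r₁ ∧ Z.Adj p r₂ := by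
    intro p hp
    obtain ⟨z₁, z₂, hz, hz1, hz2⟩ := hmin2 (θ ⟨p, hp⟩)
    have key : ∀ z : V, H.Adj (θ ⟨p, hp⟩) z → Z.Adj p ↑(θ.symm z) := by
      intro z hz'
      have h1 : Z.coe.Adj (θ.symm (θ ⟨p, hp⟩)) (θ.symm z) := θ.symm.map_rel_iff.mpr hz'
      rw [RelIso.symm_apply_apply] at h1
      exact h1
    refine ⟨↑(θ.symm z₁), ↑(θ.symm z₂), ?_, key _ hz1, key _ hz2⟩
    intro h
    exact hz (θ.toEquiv.symm.injective (Subtype.ext h))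
  -- classification of neighbours of T-side vertices
  have hTnbr : ∀ w : W, w ∈ Y.verts → w ≠ a → w ≠ b →
      ∀ r : W, Z.Adj w r → r = a ∨ r = b := by
    intro w hwY hwa hwb r hr
    by_contra hc
    push_neg at hc
    rcases hcover r with hrX | hrY
    · exact hnocross hrX hc.1 hc.2 hwY hwa hwb hr.symm
    · exact hnoT w r hwY hwa hwb hrY hc.1 hc.2 hr
  have hboth : ∀ p : W, p ∈ Z.verts → (∀ r : W, Z.Adj p r → r = a ∨ r = b) →
      Z.Adj p a ∧ Z.Adj p b := by
    intro p hp hcl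
    obtain ⟨r₁, r₂, hne, h1, h2⟩ := hZmin2 p hp
    rcases hcl r₁ h1 with rfl | rfl <;> rcases hcl r₂ h2 with rfl | rfl
    · exact absurd rfl hne
    · exact ⟨h1, h2⟩
    · exact ⟨h2, h1⟩
    · exact absurd rfl hne
  have hTadj : ∀ w : W, w ∈ Z.verts → w ∈ Y.verts → w ≠ a → w ≠ b →
      Z.Adj w a ∧ Z.Adj w b := by
    intro w hwZ hwY hwa hwb
    exact hboth w hwZ (hTnbr w hwY hwa hwb)
  have hw0 := hTadj w₀ hw₀Z hw₀Y hw₀a hw₀b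
  have haZ : a ∈ Z.verts := hw0.1.snd_mem
  have hbZ : b ∈ Z.verts := hw0.2.snd_mem
  -- S-side vertices are adjacent to a and b as well
  have hSadj : ∀ x : W, x ∈ Z.verts → x ∈ X.verts → x ≠ a → x ≠ b →
      Z.Adj x a ∧ Z.Adj x b := by
    intro x hxZ hxX hxa hxb
    by_cases hex : ∃ y : W, y ∈ X.verts ∧ y ≠ a ∧ y ≠ b ∧ Z.Adj x y
    · obtain ⟨y, hyX, hya, hyb, hxy⟩ := hex
      have hwx : w₀ ≠ x := by
        rintro rfl
        rcases hXY w₀ hxX hw₀Y with rfl | rfl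
        · exact hw₀a rfl
        · exact hw₀b rfl
      have hwy : w₀ ≠ y := by
        rintro rfl
        rcases hXY w₀ hyX hw₀Y with rfl | rfl
        · exact hya rfl
        · exact hyb rfl
      have hone : ∀ c : W, Z.Adj w₀ c → c ≠ x → c ≠ y → Z.Adj x c := by
        intro c hwc hcx hcy
        obtain ⟨r₁, r₂, r₃, r₄, hA, hB, m1, m2, m3, m4, hne⟩ :=
          key hmepl θ hwc hxy hwx hwy hcx hcy
        have hres : ∀ (s₁ s₂ : W), Z.Adj s₁ s₂ → (s₁ = w₀ ∨ s₁ = c) → (s₂ = x ∨ s₂ = y) →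
            s₁ = c := by
          rintro s₁ s₂ hadj (rfl | rfl) hm
          · exfalso
            rcases hm with rfl | rfl
            · exact hnocross hxX hxa hxb hw₀Y hw₀a hw₀b hadj.symm
            · exact hnocross hyX hya hyb hw₀Y hw₀a hw₀b hadj.symm
          · rfl
        have e1 : r₁ = c := hres r₁ r₂ hA m1 m2
        have e3 : r₃ = c := hres r₃ r₄ hB m3 m4
        subst e1; subst e3
        have hr24 : r₂ ≠ r₄ := by
          intro h
          rw [h] at hne
          exact hne rfl
        rcases m2 with rfl | rfl
        · exact hA.symm
        · rcases m4 with rfl | rfl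
          · exact hB.symm
          · exact absurd rfl hr24
      constructor
      · exact hone a hw0.1 (Ne.symm hxa) (Ne.symm hya)
      · exact hone b hw0.2 (Ne.symm hxb) (Ne.symm hyb)
    · push_neg at hex
      apply hboth x hxZ
      intro r hr
      by_contra hc
      push_neg at hc
      rcases hcover r with hrX | hrY
      · exact hex r hrX hc.1 hc.2 hr
      · exact hnocross hxX hxa hxb hrY hc.1 hc.2 hr
  -- the common-neighbour maps
  have hYofZ : ∀ w : W, w ∈ Y.verts → w ≠ a → w ≠ b → Z.Adj w a → Z.Adj w b →
      Y.Adj w a ∧ Y.Adj w b := by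
    intro w hwY hwa hwb h1 h2
    constructor
    · rcases hAclass (Z.adj_sub h1) with h | h
      · exfalso
        rcases hXY w h.fst_mem hwY with rfl | rfl
        · exact hwa rfl
        · exact hwb rfl
      · exact h
    · rcases hAclass (Z.adj_sub h2) with h | h
      · exfalso
        rcases hXY w h.fst_mem hwY with rfl | rfl
        · exact hwa rfl
        · exact hwb rfl
      · exact h
  have hXofZ : ∀ w : W, w ∈ X.verts → w ≠ a → w ≠ b → Z.Adj w a → Z.Adj w b →
      X.Adj w a ∧ X.Adj w b := by
    intro w hwX hwa hwb h1 h2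
    constructor
    · rcases hAclass (Z.adj_sub h1) with h | h
      · exact h
      · exfalso
        rcases hXY w hwX h.fst_mem with rfl | rfl
        · exact hwa rfl
        · exact hwb rfl
    · rcases hAclass (Z.adj_sub h2) with h | h
      · exact h
      · exfalso
        rcases hXY w hwX h.fst_mem with rfl | rfl
        · exact hwa rfl
        · exact hwb rfl
  have hψa : ∀ h : a ∈ Y.verts, ψ.symm ⟨a, h⟩ = u := by
    intro h
    have h1 : (⟨a, h⟩ : ↥Y.verts) = ψ u := Subtype.ext hbu.symm
    rw [h1, RelIso.symm_apply_apply]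
  have hψb : ∀ h : b ∈ Y.verts, ψ.symm ⟨b, h⟩ = v := by
    intro h
    have h1 : (⟨b, h⟩ : ↥Y.verts) = ψ v := Subtype.ext hbv.symm
    rw [h1, RelIso.symm_apply_apply]
  have hφa : ∀ h : a ∈ X.verts, φ.symm ⟨a, h⟩ = u := by
    intro h
    have h1 : (⟨a, h⟩ : ↥X.verts) = φ u := Subtype.ext hau.symm
    rw [h1, RelIso.symm_apply_apply]
  have hφb : ∀ h : b ∈ X.verts, φ.symm ⟨b, h⟩ = v := by
    intro h
    have h1 : (⟨b, h⟩ : ↥X.verts) = φ v := Subtype.ext hav.symm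
    rw [h1, RelIso.symm_apply_apply]
  have hmapT : ∀ (w : W) (hwZ : w ∈ Z.verts) (hwY : w ∈ Y.verts), w ≠ a → w ≠ b →
      (ψ.symm ⟨w, hwY⟩ : V) ∈ H.neighborSet u ∩ H.neighborSet v := by
    intro w hwZ hwY hwa hwb
    obtain ⟨hz1, hz2⟩ := hTadj w hwZ hwY hwa hwb
    obtain ⟨hy1, hy2⟩ := hYofZ w hwY hwa hwb hz1 hz2
    have hc1 : Y.coe.Adj ⟨w, hwY⟩ ⟨a, haY⟩ := hy1
    have hc2 : Y.coe.Adj ⟨w, hwY⟩ ⟨b, hbY⟩ := hy2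
    have hh1 : H.Adj (ψ.symm ⟨w, hwY⟩) (ψ.symm ⟨a, haY⟩) := ψ.symm.map_rel_iff.mpr hc1
    have hh2 : H.Adj (ψ.symm ⟨w, hwY⟩) (ψ.symm ⟨b, hbY⟩) := ψ.symm.map_rel_iff.mpr hc2
    rw [hψa] at hh1
    rw [hψb] at hh2
    exact ⟨hh1.symm, hh2.symm⟩
  have hmapS : ∀ (w : W) (hwZ : w ∈ Z.verts) (hwX : w ∈ X.verts), w ≠ a → w ≠ b →
      (φ.symm ⟨w, hwX⟩ : V) ∈ H.neighborSet u ∩ H.neighborSet v := by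
    intro w hwZ hwX hwa hwb
    obtain ⟨hz1, hz2⟩ := hSadj w hwZ hwX hwa hwb
    obtain ⟨hy1, hy2⟩ := hXofZ w hwX hwa hwb hz1 hz2
    have hc1 : X.coe.Adj ⟨w, hwX⟩ ⟨a, haX⟩ := hy1
    have hc2 : X.coe.Adj ⟨w, hwX⟩ ⟨b, hbX⟩ := hy2
    have hh1 : H.Adj (φ.symm ⟨w, hwX⟩) (φ.symm ⟨a, haX⟩) := φ.symm.map_rel_iff.mpr hc1
    have hh2 : H.Adj (φ.symm ⟨w, hwX⟩) (φ.symm ⟨b, hbX⟩) := φ.symm.map_rel_iff.mpr hc2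
    rw [hφa] at hh1
    rw [hφb] at hh2
    exact ⟨hh1.symm, hh2.symm⟩
  -- the four special vertices of H
  set α := θ ⟨a, haZ⟩ with hαdef
  set β := θ ⟨b, hbZ⟩ with hβdef
  set γ := θ ⟨w₀, hw₀Z⟩ with hγdef
  set δ := θ ⟨x₀, hx₀Z⟩ with hδdef
  have hγnbrs : ∀ z : V, H.Adj γ z → z = α ∨ z = β := by
    intro z hz
    have h1 : Z.coe.Adj (θ.symm γ) (θ.symm z) := θ.symm.map_rel_iff.mpr hz
    rw [hγdef, RelIso.symm_apply_apply] at h1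
    have h2 : Z.Adj w₀ ↑(θ.symm z) := h1
    have hzeq : z = θ (θ.symm z) := (θ.apply_symm_apply z).symm
    rcases hTnbr w₀ hw₀Y hw₀a hw₀b _ h2 with hva | hvb
    · left
      have h3 : θ.symm z = ⟨a, haZ⟩ := Subtype.ext hva
      rw [hzeq, h3]
    · right
      have h3 : θ.symm z = ⟨b, hbZ⟩ := Subtype.ext hvb
      rw [hzeq, h3]
  have hαγ : H.Adj α γ := θ.map_rel_iff.mpr hw0.1.symm
  have hβγ : H.Adj β γ := θ.map_rel_iff.mpr hw0.2.symm
  have hx0 := hSadj x₀ hx₀Z hx₀X hx₀a hx₀b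
  have hαδ : H.Adj α δ := θ.map_rel_iff.mpr hx0.1.symm
  have hβδ : H.Adj β δ := θ.map_rel_iff.mpr hx0.2.symm
  have hγδ : ¬ H.Adj γ δ := by
    intro h
    have h1 : Z.coe.Adj (θ.symm γ) (θ.symm δ) := θ.symm.map_rel_iff.mpr h
    rw [hγdef, hδdef, RelIso.symm_apply_apply, RelIso.symm_apply_apply] at h1
    exact hnocross hx₀X hx₀a hx₀b hw₀Y hw₀a hw₀b (SimpleGraph.Subgraph.Adj.symm h1)
  -- counting common neighbours
  have hCfin : (H.neighborSet u ∩ H.neighborSet v).Finite := Set.toFinite _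
  have h1le : 1 ≤ (H.neighborSet u ∩ H.neighborSet v).ncard :=
    (Set.ncard_pos hCfin).mpr ⟨_, hmapT w₀ hw₀Z hw₀Y hw₀a hw₀b⟩
  have hNsub : H.neighborSet α ∩ H.neighborSet γ ⊆ {β} := by
    rintro z ⟨h1, h2⟩
    rw [SimpleGraph.mem_neighborSet] at h1 h2
    rcases hγnbrs z h2 with rfl | rfl
    · exact absurd h1 (H.irrefl)
    · rfl
  have hle1 : (H.neighborSet α ∩ H.neighborSet γ).ncard ≤ 1 := by
    have := Set.ncard_le_ncard hNsub (Set.finite_singleton β)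
    simpa using this
  have hminC := hmin α γ hαγ
  have hCcard : (H.neighborSet u ∩ H.neighborSet v).ncard = 1 :=
    le_antisymm (hminC.trans hle1) h1le
  have hCsub : ∀ z₁ ∈ H.neighborSet u ∩ H.neighborSet v,
      ∀ z₂ ∈ H.neighborSet u ∩ H.neighborSet v, z₁ = z₂ :=
    (Set.ncard_le_one hCfin).mp hCcard.le
  -- uniqueness of the side vertices
  have hTuniq : ∀ (w : W), w ∈ Z.verts → w ∈ Y.verts → w ≠ a → w ≠ b → w = w₀ := by
    intro w hwZ hwY hwa hwb
    have h1 := hCsub _ (hmapT w hwZ hwY hwa hwb) _ (hmapT w₀ hw₀Z hw₀Y hw₀a hw₀b)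
    have h2 : (⟨w, hwY⟩ : ↥Y.verts) = ⟨w₀, hw₀Y⟩ := ψ.toEquiv.symm.injective h1
    exact congrArg Subtype.val h2
  have hSuniq : ∀ (w : W), w ∈ Z.verts → w ∈ X.verts → w ≠ a → w ≠ b → w = x₀ := by
    intro w hwZ hwX hwa hwb
    have h1 := hCsub _ (hmapS w hwZ hwX hwa hwb) _ (hmapS x₀ hx₀Z hx₀X hx₀a hx₀b)
    have h2 : (⟨w, hwX⟩ : ↥X.verts) = ⟨x₀, hx₀X⟩ := φ.toEquiv.symm.injective h1
    exact congrArg Subtype.val h2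
  have hZsub : ∀ p : W, p ∈ Z.verts → p = a ∨ p = b ∨ p = w₀ ∨ p = x₀ := by
    intro p hp
    by_cases hpa : p = a
    · exact Or.inl hpa
    by_cases hpb : p = b
    · exact Or.inr (Or.inl hpb)
    rcases hcover p with hpX | hpY
    · exact Or.inr (Or.inr (Or.inr (hSuniq p hp hpX hpa hpb)))
    · exact Or.inr (Or.inr (Or.inl (hTuniq p hp hpY hpa hpb)))
  have huniv : ∀ z : V, z = α ∨ z = β ∨ z = γ ∨ z = δ := by
    intro z
    have hzeq : z = θ (θ.symm z) := (θ.apply_symm_apply z).symm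
    rcases hZsub _ (θ.symm z).2 with h | h | h | h
    · left; rw [hzeq]; congr 1; exact Subtype.ext h
    · right; left; rw [hzeq]; congr 1; exact Subtype.ext h
    · right; right; left; rw [hzeq]; congr 1; exact Subtype.ext h
    · right; right; right; rw [hzeq]; congr 1; exact Subtype.ext h
  -- H must be J4
  have hαβ : H.Adj α β := by
    have hNpos : 0 < (H.neighborSet α ∩ H.neighborSet γ).ncard := lt_of_lt_of_le h1le hminC
    obtain ⟨z, hzN⟩ := (Set.ncard_pos (Set.toFinite _)).mp hNpos
    have hzβ : z = β := hNsub hzN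
    have h1 := hzN.1
    rw [SimpleGraph.mem_neighborSet] at h1
    rwa [hzβ] at h1
  have hγδ' : γ ≠ δ := by
    intro h
    have h2 : (⟨w₀, hw₀Z⟩ : ↥Z.verts) = ⟨x₀, hx₀Z⟩ := θ.toEquiv.injective h
    have h3 : w₀ = x₀ := congrArg Subtype.val h2
    rcases hXY x₀ hx₀X (h3 ▸ hw₀Y) with rfl | rfl
    · exact hx₀a rfl
    · exact hx₀b rfl
  have hαβ' : β ≠ α := hαβ.ne'
  have hαγ' : γ ≠ α := hαγ.ne'
  have hβγ' : γ ≠ β := hβγ.ne'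
  have hαδ' : δ ≠ α := hαδ.ne'
  have hβδ' : δ ≠ β := hβδ.ne'
  have hδγ' : δ ≠ γ := Ne.symm hγδ'
  have hJ : ∀ i j : Fin 4, J4.Adj i j ↔ i ≠ j ∧ s(i, j) ≠ s((0 : Fin 4), (1 : Fin 4)) := by
    intro i j
    constructor
    · rintro ⟨h1, h2⟩
      rw [SimpleGraph.fromEdgeSet_adj] at h2
      refine ⟨h1.ne, fun hs => h2 ⟨by simpa using hs, h1.ne⟩⟩
    · rintro ⟨h1, h2⟩
      refine ⟨h1, ?_⟩
      rw [SimpleGraph.fromEdgeSet_adj]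
      rintro ⟨hs, -⟩
      exact h2 (by simpa using hs)
  set f : V → Fin 4 := fun z => if z = α then 2 else if z = β then 3 else if z = γ then 0 else 1
    with hf
  set g : Fin 4 → V := fun i => if i = 2 then α else if i = 3 then β else if i = 0 then γ else δ
    with hg
  have f1 : f α = 2 := by simp [hf]
  have f2 : f β = 3 := by simp [hf, hαβ']
  have f3 : f γ = 0 := by simp [hf, hαγ', hβγ']
  have f4 : f δ = 1 := by simp [hf, hαδ', hβδ', hδγ']
  have g1 : g 2 = α := by simp [hg]
  have g2 : g 3 = β := by simp [hg]
  have g3 : g 0 = γ := by simp [hg]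
  have g4 : g 1 = δ := by simp [hg]
  apply hJ4
  refine ⟨⟨⟨f, g, ?_, ?_⟩, ?_⟩⟩
  · intro z
    rcases huniv z with rfl | rfl | rfl | rfl
    · rw [f1, g1]
    · rw [f2, g2]
    · rw [f3, g3]
    · rw [f4, g4]
  · intro i
    fin_cases i <;> simp [hf, hg, hαβ', hαγ', hβγ', hαδ', hβδ', hδγ']
  · intro z z'
    show J4.Adj (f z) (f z') ↔ H.Adj z z'
    rcases huniv z with rfl | rfl | rfl | rfl <;> rcases huniv z' with rfl | rfl | rfl | rfl
    · exact iff_of_false (fun h => absurd ((hJ _ _).mp h).1 (by simp)) (H.irrefl)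
    · rw [f1, f2]; exact iff_of_true ((hJ _ _).mpr (by decide)) hαβ
    · rw [f1, f3]; exact iff_of_true ((hJ _ _).mpr (by decide)) hαγ
    · rw [f1, f4]; exact iff_of_true ((hJ _ _).mpr (by decide)) hαδ
    · rw [f2, f1]; exact iff_of_true ((hJ _ _).mpr (by decide)) hαβ.symm
    · exact iff_of_false (fun h => absurd ((hJ _ _).mp h).1 (by simp)) (H.irrefl)
    · rw [f2, f3]; exact iff_of_true ((hJ _ _).mpr (by decide)) hβγ
    · rw [f2, f4]; exact iff_of_true ((hJ _ _).mpr (by decide)) hβδ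
    · rw [f3, f1]; exact iff_of_true ((hJ _ _).mpr (by decide)) hαγ.symm
    · rw [f3, f2]; exact iff_of_true ((hJ _ _).mpr (by decide)) hβγ.symm
    · exact iff_of_false (fun h => absurd ((hJ _ _).mp h).1 (by simp)) (H.irrefl)
    · rw [f3, f4]; exact iff_of_false (fun h => absurd ((hJ _ _).mp h).2 (by decide)) hγδ
    · rw [f4, f1]; exact iff_of_true ((hJ _ _).mpr (by decide)) hαδ.symm
    · rw [f4, f2]; exact iff_of_true ((hJ _ _).mpr (by decide)) hβδ.symm
    · rw [f4, f3]
      exact iff_of_false (fun h => absurd ((hJ _ _).mp h).2 (by decide)) (fun h => hγδ h.symm)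
    · exact iff_of_false (fun h => absurd ((hJ _ _).mp h).1 (by simp)) (H.irrefl)

end Stmt1Aux


/-- For a 2-connected graph `H` on at least 4 vertices, with `mepl H ≥ 2`
(every vertex-disjoint pair of edges has edge pair linkage at least 2), and `H ≠ J4`,
there is an edge `(u,v)` of `H` such that identifying two disjoint copies of `H` along
this edge creates no new (rogue) copy of `H`: whenever a graph `A` is the union of
subgraphs `X` and `Y`, each isomorphic to `H` via isomorphisms matching `u` and `v`
on the two shared vertices, with `V(X) ∩ V(Y) = {u,v}` and `E(X) ∩ E(Y) = {(u,v)}`,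
every subgraph of `A` isomorphic to `H` equals `X` or `Y`. -/
theorem stmt1 {V : Type*} [Fintype V] (H : SimpleGraph V)
    (h2 : TwoConnected H) (hcard : 4 ≤ Fintype.card V)
    (hmepl : ∀ e ∈ H.edgeSet, ∀ f ∈ H.edgeSet,
      (∀ v : V, ¬(v ∈ e ∧ v ∈ f)) → 2 ≤ epl H e f)
    (hJ4 : ¬ Nonempty (H ≃g J4)) :
    ∃ u v : V, H.Adj u v ∧
      ∀ (W : Type*) (A : SimpleGraph W) (X Y : A.Subgraph)
        (φ : H ≃g X.coe) (ψ : H ≃g Y.coe),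
        X ⊔ Y = ⊤ →
        (↑(φ u) : W) = (↑(ψ u) : W) →
        (↑(φ v) : W) = (↑(ψ v) : W) →
        X.verts ∩ Y.verts = {(↑(φ u) : W), (↑(φ v) : W)} →
        X.edgeSet ∩ Y.edgeSet = {s((↑(φ u) : W), (↑(φ v) : W))} →
        ∀ Z : A.Subgraph, Nonempty (Z.coe ≃g H) → Z = X ∨ Z = Y := by
  classical
  have hmin2 : ∀ x : V, ∃ r₁ r₂ : V, r₁ ≠ r₂ ∧ H.Adj x r₁ ∧ H.Adj x r₂ :=
    Stmt1Aux.two_nbrs h2 hcard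
  have hedge : ∃ p : V × V, H.Adj p.1 p.2 := by
    have hne : Nonempty V := Fintype.card_pos_iff.mp (by omega)
    obtain ⟨x⟩ := hne
    obtain ⟨r₁, r₂, -, h, -⟩ := hmin2 x
    exact ⟨(x, r₁), h⟩
  obtain ⟨p₀, hp₀mem, hp₀min⟩ := Finset.exists_min_image
    (Finset.univ.filter (fun p : V × V => H.Adj p.1 p.2))
    (fun p => (H.neighborSet p.1 ∩ H.neighborSet p.2).ncard)
    (by obtain ⟨p, hp⟩ := hedge; exact ⟨p, by simp [hp]⟩)
  obtain ⟨u, v⟩ := p₀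
  have huv : H.Adj u v := by simpa using hp₀mem
  have hmin : ∀ u' v', H.Adj u' v' →
      (H.neighborSet u ∩ H.neighborSet v).ncard ≤
        (H.neighborSet u' ∩ H.neighborSet v').ncard := by
    intro u' v' h
    exact hp₀min (u', v') (by simp [h])
  refine ⟨u, v, huv, ?_⟩
  intro W A X Y φ ψ hsup hu hv hverts hedges Z hZne
  obtain ⟨θ⟩ := hZne
  set a : W := (↑(φ u) : W) with ha
  set b : W := (↑(φ v) : W) with hb
  -- basic facts (duplicated from contra)
  have haX : a ∈ X.verts := (φ u).2
  have hbX : b ∈ X.verts := (φ v).2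
  have haY : a ∈ Y.verts := hu ▸ (ψ u).2
  have hbY : b ∈ Y.verts := hv ▸ (ψ v).2
  have hXY : ∀ p : W, p ∈ X.verts → p ∈ Y.verts → p = a ∨ p = b := by
    intro p h1 h2
    have h3 : p ∈ X.verts ∩ Y.verts := ⟨h1, h2⟩
    rw [hverts] at h3
    simpa using h3
  have hcover : ∀ p : W, p ∈ X.verts ∨ p ∈ Y.verts := by
    intro p
    have h1 : p ∈ (⊤ : A.Subgraph).verts := by simp [SimpleGraph.Subgraph.verts_top]
    rw [← hsup] at h1
    simpa [SimpleGraph.Subgraph.verts_sup] using h1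
  have hAclass : ∀ {p q : W}, A.Adj p q → X.Adj p q ∨ Y.Adj p q := by
    intro p q h
    have h1 : (⊤ : A.Subgraph).Adj p q := SimpleGraph.Subgraph.top_adj.mpr h
    rw [← hsup] at h1
    exact SimpleGraph.Subgraph.sup_adj.mp h1
  have hXab : X.Adj a b := φ.map_rel_iff.mpr huv
  have hYab : Y.Adj a b := by
    have h1 : Y.coe.Adj (ψ u) (ψ v) := ψ.map_rel_iff.mpr huv
    have h2 : Y.Adj ↑(ψ u) ↑(ψ v) := h1
    rwa [← hu, ← hv] at h2
  have hnocross : ∀ {p q : W}, p ∈ X.verts → p ≠ a → p ≠ b →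
      q ∈ Y.verts → q ≠ a → q ≠ b → ¬ Z.Adj p q := by
    intro p q hpX hpa hpb hqY hqa hqb hadj
    rcases hAclass (Z.adj_sub hadj) with h | h
    · rcases hXY q h.snd_mem hqY with rfl | rfl
      · exact hqa rfl
      · exact hqb rfl
    · rcases hXY p hpX h.fst_mem with rfl | rfl
      · exact hpa rfl
      · exact hpb rfl
  by_cases hT : ∃ w : W, w ∈ Z.verts ∧ w ∈ Y.verts ∧ w ≠ a ∧ w ≠ b
  swap
  · -- Z = X
    push_neg at hT
    left
    apply Stmt1Aux.eq_of_subset θ φ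
    · intro p hp
      rcases hcover p with h | h
      · exact h
      · by_cases hpa : p = a
        · exact hpa ▸ haX
        by_cases hpb : p = b
        · exact hpb ▸ hbX
        · exact absurd hpb (not_not.mpr (hT p hp h hpa))
    · intro p q hpq
      rcases hAclass (Z.adj_sub hpq) with h | h
      · exact h
      · have hpZ : p ∈ Z.verts := hpq.fst_mem
        have hqZ : q ∈ Z.verts := hpq.snd_mem
        have hp' : p = a ∨ p = b := by
          by_cases hpa : p = a
          · exact Or.inl hpa
          · exact Or.inr (by by_contra hpb; exact hpb (hT p hpZ h.fst_mem hpa))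
        have hq' : q = a ∨ q = b := by
          by_cases hqa : q = a
          · exact Or.inl hqa
          · exact Or.inr (by by_contra hqb; exact hqb (hT q hqZ h.snd_mem hqa))
        rcases hp' with rfl | rfl <;> rcases hq' with rfl | rfl
        · exact absurd rfl hpq.ne
        · exact hXab
        · exact hXab.symm
        · exact absurd rfl hpq.ne
  by_cases hS : ∃ x : W, x ∈ Z.verts ∧ x ∈ X.verts ∧ x ≠ a ∧ x ≠ b
  swap
  · -- Z = Y
    push_neg at hS
    right
    apply Stmt1Aux.eq_of_subset θ ψ
    · intro p hp
      rcases hcover p with h | h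
      · by_cases hpa : p = a
        · exact hpa ▸ haY
        by_cases hpb : p = b
        · exact hpb ▸ hbY
        · exact absurd hpb (not_not.mpr (hS p hp h hpa))
      · exact h
    · intro p q hpq
      rcases hAclass (Z.adj_sub hpq) with h | h
      · have hpZ : p ∈ Z.verts := hpq.fst_mem
        have hqZ : q ∈ Z.verts := hpq.snd_mem
        have hp' : p = a ∨ p = b := by
          by_cases hpa : p = a
          · exact Or.inl hpa
          · exact Or.inr (by by_contra hpb; exact hpb (hS p hpZ h.fst_mem hpa))
        have hq' : q = a ∨ q = b := by
          by_cases hqa : q = a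
          · exact Or.inl hqa
          · exact Or.inr (by by_contra hqb; exact hqb (hS q hqZ h.snd_mem hqa))
        rcases hp' with rfl | rfl <;> rcases hq' with rfl | rfl
        · exact absurd rfl hpq.ne
        · exact hYab
        · exact hYab.symm
        · exact absurd rfl hpq.ne
      · exact h
  -- crossing case
  exfalso
  obtain ⟨w₀, hw₀Z, hw₀Y, hw₀a, hw₀b⟩ := hT
  obtain ⟨x₀, hx₀Z, hx₀X, hx₀a, hx₀b⟩ := hS
  by_cases hTE : ∃ p q : W, p ∈ Y.verts ∧ p ≠ a ∧ p ≠ b ∧ q ∈ Y.verts ∧ q ≠ a ∧ q ≠ b ∧ Z.Adj p q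
  · by_cases hSE : ∃ p q : W,
        p ∈ X.verts ∧ p ≠ a ∧ p ≠ b ∧ q ∈ X.verts ∧ q ≠ a ∧ q ≠ b ∧ Z.Adj p q
    · -- internal edges on both sides: impossible
      obtain ⟨t₁, t₂, ht₁Y, ht₁a, ht₁b, ht₂Y, ht₂a, ht₂b, hte⟩ := hTE
      obtain ⟨s₁, s₂, hs₁X, hs₁a, hs₁b, hs₂X, hs₂a, hs₂b, hse⟩ := hSE
      have hd : ∀ (s t : W), s ∈ X.verts → s ≠ a → s ≠ b →
          t ∈ Y.verts → t ≠ a → t ≠ b → s ≠ t := by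
        rintro s t hsX hsa hsb htY hta htb rfl
        rcases hXY s hsX htY with rfl | rfl
        · exact hsa rfl
        · exact hsb rfl
      obtain ⟨r₁, r₂, r₃, r₄, hA, -, m1, m2, -, -, -⟩ :=
        Stmt1Aux.key hmepl θ hse hte
          (hd s₁ t₁ hs₁X hs₁a hs₁b ht₁Y ht₁a ht₁b)
          (hd s₁ t₂ hs₁X hs₁a hs₁b ht₂Y ht₂a ht₂b)
          (hd s₂ t₁ hs₂X hs₂a hs₂b ht₁Y ht₁a ht₁b)
          (hd s₂ t₂ hs₂X hs₂a hs₂b ht₂Y ht₂a ht₂b)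
      have hr₁ : r₁ ∈ X.verts ∧ r₁ ≠ a ∧ r₁ ≠ b := by
        rcases m1 with rfl | rfl
        · exact ⟨hs₁X, hs₁a, hs₁b⟩
        · exact ⟨hs₂X, hs₂a, hs₂b⟩
      have hr₂ : r₂ ∈ Y.verts ∧ r₂ ≠ a ∧ r₂ ≠ b := by
        rcases m2 with rfl | rfl
        · exact ⟨ht₁Y, ht₁a, ht₁b⟩
        · exact ⟨ht₂Y, ht₂a, ht₂b⟩
      exact hnocross hr₁.1 hr₁.2.1 hr₁.2.2 hr₂.1 hr₂.2.1 hr₂.2.2 hA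
    · -- no internal S-edges: apply contra with X and Y swapped
      push_neg at hSE
      exact Stmt1Aux.contra hmepl hJ4 hmin2 huv hmin ψ φ
        (by rw [sup_comm]; exact hsup)
        hu.symm hv.symm ha.symm hb.symm
        (by rw [Set.inter_comm]; exact hverts) θ
        (fun p q hp hpa hpb hq hqa hqb => hSE p q hp hpa hpb hq hqa hqb)
        hx₀Z hx₀X hx₀a hx₀b hw₀Z hw₀Y hw₀a hw₀b
  · push_neg at hTE
    exact Stmt1Aux.contra hmepl hJ4 hmin2 huv hmin φ ψ hsup
      ha.symm hb.symm hu.symm hv.symm hverts θ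
      (fun p q hp hpa hpb hq hqa hqb => hTE p q hp hpa hpb hq hqa hqb)
      hw₀Z hw₀Y hw₀a hw₀b hx₀Z hx₀X hx₀a hx₀b
end

section
/- Let H be a 2-connected finite simple graph with mepl(H) ≥ 2 and |V(H)| ≥ 4. Let A be a graph that is the union of two subgraphs X and Y, each isomorphic to H, with V(X) ∩ V(Y) = {u,v} and E(X) ∩ E(Y) = {(u,v)}. Suppose Z is a subgraph of A isomorphic to H with Z ≠ X and Z ≠ Y. Then: (1) Z contains a vertex of V(X) − V(Y) and a vertex of V(Y) − V(X); (2) both u and v belong to V(Z); (3) Z has no edge with both endpoints in V(X) − V(Y), or Z has no edge with both endpoints in V(Y) − V(X); and (4) H has a vertex of degree 2. -/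
open SimpleGraph

namespace Stmt2Aux

variable {α β : Type*}

lemma walk_closed {G : SimpleGraph α} {C : Set α}
    (hC : ∀ ⦃a b : α⦄, G.Adj a b → a ∈ C → b ∈ C) :
    ∀ {a b : α}, G.Walk a b → a ∈ C → b ∈ C
  | _, _, SimpleGraph.Walk.nil, ha => ha
  | _, _, SimpleGraph.Walk.cons h p, ha => walk_closed hC p (hC h ha)

lemma reach_closed {G : SimpleGraph α} {C : Set α}
    (hC : ∀ ⦃a b : α⦄, G.Adj a b → a ∈ C → b ∈ C) {a b : α}
    (h : G.Reachable a b) (ha : a ∈ C) : b ∈ C := by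
  obtain ⟨p⟩ := h; exact walk_closed hC p ha

lemma exists_third [Fintype α] (h : 2 < Fintype.card α) (a b : α) :
    ∃ c : α, c ≠ a ∧ c ≠ b := by
  classical
  by_contra hc
  push_neg at hc
  have hsub : (Finset.univ : Finset α) ⊆ {a, b} := by
    intro c _
    by_cases hca : c = a
    · simp [hca]
    · simp [hc c hca]
  have h1 : Fintype.card α ≤ ({a, b} : Finset α).card := by
    rw [← Finset.card_univ]; exact Finset.card_le_card hsub
  have h2 : ({a, b} : Finset α).card ≤ 2 :=
    (Finset.card_insert_le _ _).trans (by simp)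
  omega

def deleteIso {G : SimpleGraph α} {G' : SimpleGraph β} (e : G ≃g G') (v : α) :
    (SimpleGraph.induce {x | x ≠ v} G) ≃g (SimpleGraph.induce {y | y ≠ e v} G') where
  toEquiv := e.toEquiv.subtypeEquiv (fun x => by
    simp only [Set.mem_setOf_eq, ne_eq]
    exact not_congr (EmbeddingLike.apply_eq_iff_eq e.toEquiv).symm)
  map_rel_iff' := by
    intro a b
    simp only [Equiv.subtypeEquiv, comap_adj, Function.Embedding.coe_subtype,
      Equiv.coe_fn_mk]
    exact e.map_rel_iff

lemma tc_connected [Fintype α] {G : SimpleGraph α} (h : TwoConnected G) : G.Connected := by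
  have hcard := h.1
  have hne : Nonempty α := Fintype.card_pos_iff.mp (by omega)
  rw [connected_iff]
  refine ⟨fun a b => ?_, hne⟩
  obtain ⟨c, hca, hcb⟩ := exists_third h.1 a b
  have hr := (h.2 c).preconnected ⟨a, hca.symm⟩ ⟨b, hcb.symm⟩
  exact hr.map (SimpleGraph.Embedding.induce {u | u ≠ c}).toHom

lemma tc_degree [Fintype α] {G : SimpleGraph α} (h : TwoConnected G) (w : α) :
    2 ≤ (G.neighborSet w).ncard := by
  have hcard := h.1
  by_contra hlt
  push_neg at hlt
  obtain ⟨n, hn, hnw⟩ : ∃ n : α, G.neighborSet w ⊆ {n} ∧ n ≠ w := by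
    rcases Set.eq_empty_or_nonempty (G.neighborSet w) with he | ⟨n, hn⟩
    · obtain ⟨n, hnw⟩ := Fintype.exists_ne_of_one_lt_card (by omega) w
      exact ⟨n, by simp [he], hnw⟩
    · refine ⟨n, ?_, fun hnweq => G.irrefl (hnweq ▸ hn)⟩
      intro m hm
      exact (Set.ncard_le_one_iff (Set.toFinite _)).mp (by omega) hm hn
  obtain ⟨y, hyn, hyw⟩ := exists_third h.1 n w
  have hr := (h.2 n).preconnected ⟨w, hnw.symm⟩ ⟨y, hyn⟩
  have hstep : ∀ ⦃a b : ↥{u | u ≠ n}⦄,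
      (SimpleGraph.induce {u | u ≠ n} G).Adj a b →
      a ∈ {x : ↥{u | u ≠ n} | (x : α) = w} → b ∈ {x : ↥{u | u ≠ n} | (x : α) = w} := by
    intro a b hab ha
    have hab' : G.Adj (a : α) (b : α) := hab
    rw [Set.mem_setOf_eq] at ha
    have hbn : (b : α) ∈ G.neighborSet w := by rw [← ha]; exact hab'
    exact absurd (hn hbn) b.2
  have := reach_closed hstep hr rfl
  exact hyw this



lemma sub_eq_of_le {W V : Type*} [Fintype V] {A : SimpleGraph W} {H : SimpleGraph V}
    {P Q : A.Subgraph} (hPQ : P ≤ Q) (eP : P.coe ≃g H) (eQ : Q.coe ≃g H) : P = Q := by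
  have hQfinv : Q.verts.Finite := Set.finite_coe_iff.mp (Finite.of_equiv V eQ.toEquiv.symm)
  have hcardv : Q.verts.ncard ≤ P.verts.ncard := by
    rw [← Nat.card_coe_set_eq, ← Nat.card_coe_set_eq,
      Nat.card_congr eP.toEquiv, Nat.card_congr eQ.toEquiv]
  have hv : P.verts = Q.verts := Set.eq_of_subset_of_ncard_le hPQ.1 hcardv hQfinv
  have hPe : P.edgeSet.ncard = Nat.card H.edgeSet := by
    rw [← Subgraph.image_coe_edgeSet_coe,
      Set.ncard_image_of_injective _ (Sym2.map.injective Subtype.val_injective),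
      ← Nat.card_coe_set_eq, Nat.card_congr eP.mapEdgeSet]
  have hQe : Q.edgeSet.ncard = Nat.card H.edgeSet := by
    rw [← Subgraph.image_coe_edgeSet_coe,
      Set.ncard_image_of_injective _ (Sym2.map.injective Subtype.val_injective),
      ← Nat.card_coe_set_eq, Nat.card_congr eQ.mapEdgeSet]
  have hQef : Q.edgeSet.Finite := by
    rw [← Subgraph.image_coe_edgeSet_coe]
    exact Set.Finite.image _
      (Set.finite_coe_iff.mp (Finite.of_equiv _ eQ.mapEdgeSet.symm))
  have he : P.edgeSet = Q.edgeSet :=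
    Set.eq_of_subset_of_ncard_le (Subgraph.edgeSet_mono hPQ) (by rw [hPe, hQe]) hQef
  refine Subgraph.ext hv ?_
  ext a b
  rw [← Subgraph.mem_edgeSet, ← Subgraph.mem_edgeSet, he]

end Stmt2Aux

/-- Let `H` be 2-connected with `|V(H)| ≥ 4` and `mepl H ≥ 2`.  Let `A` be the union of
subgraphs `X` and `Y`, each isomorphic to `H`, with `V(X) ∩ V(Y) = {u,v}` and
`E(X) ∩ E(Y) = {(u,v)}`.  If `Z` is a subgraph of `A` isomorphic to `H` with `Z ≠ X`
and `Z ≠ Y`, then: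
(1) `Z` contains a vertex of `V(X) − V(Y)` and a vertex of `V(Y) − V(X)`;
(2) both `u` and `v` belong to `V(Z)`;
(3) `Z` has no edge inside `V(X) − V(Y)`, or no edge inside `V(Y) − V(X)`; and
(4) `H` has a vertex of degree 2. -/
theorem stmt2 {V : Type*} [Fintype V] (H : SimpleGraph V)
    (h2 : TwoConnected H) (hcard : 4 ≤ Fintype.card V)
    (hmepl : ∀ e ∈ H.edgeSet, ∀ f ∈ H.edgeSet,
      (∀ v : V, ¬(v ∈ e ∧ v ∈ f)) → 2 ≤ epl H e f)
    {W : Type*} (A : SimpleGraph W) (X Y : A.Subgraph)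
    (hX : Nonempty (X.coe ≃g H)) (hY : Nonempty (Y.coe ≃g H))
    (hunion : X ⊔ Y = ⊤)
    (u v : W) (huv : u ≠ v)
    (hverts : X.verts ∩ Y.verts = {u, v})
    (hedges : X.edgeSet ∩ Y.edgeSet = {s(u, v)})
    (Z : A.Subgraph) (hZ : Nonempty (Z.coe ≃g H)) (hZX : Z ≠ X) (hZY : Z ≠ Y) :
    ((Z.verts ∩ (X.verts \ Y.verts)).Nonempty ∧
        (Z.verts ∩ (Y.verts \ X.verts)).Nonempty) ∧
      (u ∈ Z.verts ∧ v ∈ Z.verts) ∧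
      ((¬ ∃ p q : W, Z.Adj p q ∧ p ∈ X.verts \ Y.verts ∧ q ∈ X.verts \ Y.verts) ∨
        (¬ ∃ p q : W, Z.Adj p q ∧ p ∈ Y.verts \ X.verts ∧ q ∈ Y.verts \ X.verts)) ∧
      (∃ w : V, (H.neighborSet w).ncard = 2) := by
  obtain ⟨φX⟩ := hX
  obtain ⟨φY⟩ := hY
  obtain ⟨φ⟩ := hZ
  -- basic facts
  have hAdj : ∀ a b : W, A.Adj a b → X.Adj a b ∨ Y.Adj a b := by
    intro a b h
    have h' : (⊤ : A.Subgraph).Adj a b := Subgraph.top_adj.mpr h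
    rw [← hunion] at h'
    exact Subgraph.sup_adj.mp h'
  have huniv : ∀ w : W, w ∈ X.verts ∪ Y.verts := by
    intro w
    have : (X ⊔ Y).verts = (⊤ : A.Subgraph).verts := by rw [hunion]
    rw [Subgraph.verts_sup, Subgraph.verts_top] at this
    rw [this]; trivial
  have hsuv : s(u, v) ∈ X.edgeSet ∩ Y.edgeSet := by rw [hedges]; rfl
  have hXuv : X.Adj u v := Subgraph.mem_edgeSet.mp hsuv.1
  have hYuv : Y.Adj u v := Subgraph.mem_edgeSet.mp hsuv.2
  have hpair : ({u, v} : Set W) ⊆ X.verts ∩ Y.verts := by rw [hverts]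
  have hmemuv : ∀ a : W, a ∈ X.verts → a ∈ Y.verts → a = u ∨ a = v := by
    intro a ha hb
    have : a ∈ ({u, v} : Set W) := hverts ▸ ⟨ha, hb⟩
    simpa using this
  have hXadj : ∀ a b : W, A.Adj a b → a ∈ X.verts → b ∈ X.verts → X.Adj a b := by
    intro a b h ha hb
    rcases hAdj a b h with hx | hy
    · exact hx
    · rcases hmemuv a ha (Y.edge_vert hy) with rfl | rfl <;>
        rcases hmemuv b hb (Y.edge_vert hy.symm) with rfl | rfl
      · exact absurd rfl h.ne
      · exact hXuv
      · exact hXuv.symm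
      · exact absurd rfl h.ne
  have hYadj : ∀ a b : W, A.Adj a b → a ∈ Y.verts → b ∈ Y.verts → Y.Adj a b := by
    intro a b h ha hb
    rcases hAdj a b h with hx | hy
    · rcases hmemuv a (X.edge_vert hx) ha with rfl | rfl <;>
        rcases hmemuv b (X.edge_vert hx.symm) hb with rfl | rfl
      · exact absurd rfl h.ne
      · exact hYuv
      · exact hYuv.symm
      · exact absurd rfl h.ne
    · exact hy
  have hST : ∀ a b : W, A.Adj a b → a ∈ X.verts \ Y.verts → b ∈ Y.verts \ X.verts → False := by
    intro a b h ha hb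
    rcases hAdj a b h with hx | hy
    · exact hb.2 (X.edge_vert hx.symm)
    · exact ha.2 (Y.edge_vert hy)
  -- part 1
  have h1S : (Z.verts ∩ (X.verts \ Y.verts)).Nonempty := by
    by_contra hS
    rw [Set.not_nonempty_iff_eq_empty] at hS
    have hsub : Z.verts ⊆ Y.verts := by
      intro z hz
      rcases huniv z with hx | hy
      · by_contra hzy
        rw [Set.eq_empty_iff_forall_notMem] at hS
        exact hS z ⟨hz, hx, hzy⟩
      · exact hy
    exact hZY (Stmt2Aux.sub_eq_of_le
      ⟨hsub, fun a b h => hYadj a b h.adj_sub (hsub (Z.edge_vert h)) (hsub (Z.edge_vert h.symm))⟩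
      φ φY)
  have h1T : (Z.verts ∩ (Y.verts \ X.verts)).Nonempty := by
    by_contra hT
    rw [Set.not_nonempty_iff_eq_empty] at hT
    have hsub : Z.verts ⊆ X.verts := by
      intro z hz
      rcases huniv z with hx | hy
      · exact hx
      · by_contra hzx
        rw [Set.eq_empty_iff_forall_notMem] at hT
        exact hT z ⟨hz, hy, hzx⟩
    exact hZX (Stmt2Aux.sub_eq_of_le
      ⟨hsub, fun a b h => hXadj a b h.adj_sub (hsub (Z.edge_vert h)) (hsub (Z.edge_vert h.symm))⟩
      φ φX)
  obtain ⟨s, hsZ, hsS⟩ := h1S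
  obtain ⟨t, htZ, htT⟩ := h1T
  -- part 2
  have main : ∀ m k : W, ({u, v} : Set W) = {m, k} → m ∉ Z.verts → False := by
    intro m k hmk hm
    have hkuv : k ∈ ({u, v} : Set W) := by rw [hmk]; simp
    have hmuv : m ∈ ({u, v} : Set W) := by rw [hmk]; simp
    have hkX : k ∈ X.verts := (hpair hkuv).1
    have hkY : k ∈ Y.verts := (hpair hkuv).2
    have hstep : ∀ a b : W, Z.Adj a b → a ∈ X.verts \ Y.verts → b ≠ k →
        b ∈ X.verts \ Y.verts := by
      intro a b hab ha hbk
      rcases hAdj a b hab.adj_sub with hx | hy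
      · have hbX : b ∈ X.verts := X.edge_vert hx.symm
        refine ⟨hbX, fun hbY => ?_⟩
        have : b = u ∨ b = v := hmemuv b hbX hbY
        have hbuv : b ∈ ({u, v} : Set W) := by simpa using this
        rw [hmk] at hbuv
        rcases hbuv with rfl | rfl
        · exact hm (Z.edge_vert hab.symm)
        · exact hbk rfl
      · exact absurd (Y.edge_vert hy) ha.2
    have hsk : s ≠ k := fun h => hsS.2 (h ▸ hkY)
    have htk : t ≠ k := fun h => htT.2 (h ▸ hkX)
    by_cases hk : k ∈ Z.verts
    · set z0 : Z.verts := ⟨k, hk⟩ with hz0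
      have hconn : (SimpleGraph.induce {x | x ≠ z0} Z.coe).Connected :=
        (Stmt2Aux.deleteIso φ z0).connected_iff.mpr (h2.2 (φ z0))
      have hr := hconn.preconnected
        ⟨⟨s, hsZ⟩, by simp [hz0, Subtype.ext_iff]; exact hsk⟩
        ⟨⟨t, htZ⟩, by simp [hz0, Subtype.ext_iff]; exact htk⟩
      have hres := Stmt2Aux.reach_closed
        (C := {x : ↥{x : Z.verts | x ≠ z0} | ((x : Z.verts) : W) ∈ X.verts \ Y.verts})
        (by
          intro a b hab ha
          have hab' : Z.Adj ((a : Z.verts) : W) ((b : Z.verts) : W) := hab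
          refine hstep _ _ hab' ha (fun hbk => ?_)
          exact b.2 (Subtype.ext hbk))
        hr hsS
      exact htT.2 hres.1
    · have hconn : Z.coe.Connected := φ.connected_iff.mpr (Stmt2Aux.tc_connected h2)
      have hr := hconn.preconnected ⟨s, hsZ⟩ ⟨t, htZ⟩
      have hres := Stmt2Aux.reach_closed
        (C := {x : Z.verts | (x : W) ∈ X.verts \ Y.verts})
        (by
          intro a b hab ha
          have hab' : Z.Adj (a : W) (b : W) := hab
          exact hstep _ _ hab' ha (fun hbk => hk (hbk ▸ b.2)))
        hr hsS
      exact htT.2 hres.1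
  have h2v : v ∈ Z.verts := by
    by_contra h
    exact main v u (Set.pair_comm u v) h
  have h2u : u ∈ Z.verts := by
    by_contra h
    exact main u v rfl h
  -- part 3
  have h3 : (¬ ∃ p q : W, Z.Adj p q ∧ p ∈ X.verts \ Y.verts ∧ q ∈ X.verts \ Y.verts) ∨
      (¬ ∃ p q : W, Z.Adj p q ∧ p ∈ Y.verts \ X.verts ∧ q ∈ Y.verts \ X.verts) := by
    by_contra h3
    push_neg at h3
    obtain ⟨⟨p, q, hpq, hpS, hqS⟩, p', q', hpq', hpT, hqT⟩ := h3
    set zp : Z.verts := ⟨p, Z.edge_vert hpq⟩ with hzp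
    set zq : Z.verts := ⟨q, Z.edge_vert hpq.symm⟩ with hzq
    set zp' : Z.verts := ⟨p', Z.edge_vert hpq'⟩ with hzp'
    set zq' : Z.verts := ⟨q', Z.edge_vert hpq'.symm⟩ with hzq'
    have hadjpq : Z.coe.Adj zp zq := hpq
    have hadjpq' : Z.coe.Adj zp' zq' := hpq'
    have he : s(φ zp, φ zq) ∈ H.edgeSet := φ.map_rel_iff.mpr hadjpq
    have hf : s(φ zp', φ zq') ∈ H.edgeSet := φ.map_rel_iff.mpr hadjpq'
    have hSTd : ∀ a : W, a ∈ X.verts \ Y.verts → a ∈ Y.verts \ X.verts → False :=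
      fun a h h' => h.2 h'.1
    have hdisj : ∀ x : V, ¬(x ∈ s(φ zp, φ zq) ∧ x ∈ s(φ zp', φ zq')) := by
      rintro x ⟨hxe, hxf⟩
      rw [Sym2.mem_iff] at hxe hxf
      have hinj : ∀ (z1 z2 : Z.verts), φ z1 = φ z2 → (z1 : W) = (z2 : W) :=
        fun z1 z2 hz => congrArg _ (φ.toEquiv.injective hz)
      rcases hxe with h | h <;> rcases hxf with h' | h'
      · have hpp' : p = p' := by simpa using hinj _ _ (h.symm.trans h')
        exact hSTd p hpS (by rw [hpp']; exact hpT)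
      · have hpp' : p = q' := by simpa using hinj _ _ (h.symm.trans h')
        exact hSTd p hpS (by rw [hpp']; exact hqT)
      · have hpp' : q = p' := by simpa using hinj _ _ (h.symm.trans h')
        exact hSTd q hqS (by rw [hpp']; exact hpT)
      · have hpp' : q = q' := by simpa using hinj _ _ (h.symm.trans h')
        exact hSTd q hqS (by rw [hpp']; exact hqT)
    have hlink := hmepl _ he _ hf hdisj
    unfold epl at hlink
    have hne0 := Set.nonempty_of_ncard_ne_zero (s :=
      {g ∈ H.edgeSet | (∃ x, x ∈ g ∧ x ∈ s(φ zp, φ zq)) ∧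
        (∃ x, x ∈ g ∧ x ∈ s(φ zp', φ zq'))}) (by omega)
    obtain ⟨g, hg, ⟨a, hag, hae⟩, b, hbg, hbf⟩ := hne0
    have hab : a ≠ b := fun h => hdisj a ⟨hae, h ▸ hbf⟩
    have hgab : g = s(a, b) := (Sym2.mem_and_mem_iff hab).mp ⟨hag, hbg⟩
    rw [hgab] at hg
    have hAdjab : H.Adj a b := hg
    have hx1 : ((φ.symm a : Z.verts) : W) ∈ X.verts \ Y.verts := by
      rcases Sym2.mem_iff.mp hae with h | h
      · rw [h]; simpa using hpS
      · rw [h]; simpa using hqS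
    have hx2 : ((φ.symm b : Z.verts) : W) ∈ Y.verts \ X.verts := by
      rcases Sym2.mem_iff.mp hbf with h | h
      · rw [h]; simpa using hpT
      · rw [h]; simpa using hqT
    have hZadj : Z.coe.Adj (φ.symm a) (φ.symm b) := by
      apply φ.map_rel_iff.mp
      simpa using hAdjab
    have hZadj' : Z.Adj ((φ.symm a : Z.verts) : W) ((φ.symm b : Z.verts) : W) := hZadj
    exact hST _ _ hZadj'.adj_sub hx1 hx2
  -- part 4
  have degcase : ∀ s' : W, s' ∈ Z.verts → Z.neighborSet s' ⊆ {u, v} →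
      ∃ w : V, (H.neighborSet w).ncard = 2 := by
    intro s' hs' hsub
    set sz : Z.verts := ⟨s', hs'⟩ with hsz
    refine ⟨φ sz, le_antisymm ?_ (Stmt2Aux.tc_degree h2 (φ sz))⟩
    have hch : (H.neighborSet (φ sz)).ncard = (Z.neighborSet s').ncard := by
      rw [← Nat.card_coe_set_eq, ← Nat.card_coe_set_eq]
      exact Nat.card_congr ((φ.mapNeighborSet sz).symm.trans (Subgraph.coeNeighborSetEquiv sz))
    rw [hch]
    calc (Z.neighborSet s').ncard ≤ ({u, v} : Set W).ncard :=
          Set.ncard_le_ncard hsub ((Set.finite_singleton v).insert u)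
      _ = 2 := Set.ncard_pair huv
  have h4 : ∃ w : V, (H.neighborSet w).ncard = 2 := by
    rcases h3 with h | h
    · refine degcase s hsZ ?_
      intro w hw
      rcases hAdj _ _ hw.adj_sub with hx | hy
      · have hwX : w ∈ X.verts := X.edge_vert hx.symm
        by_cases hwY : w ∈ Y.verts
        · simpa using hmemuv w hwX hwY
        · exact absurd ⟨s, w, hw, hsS, hwX, hwY⟩ h
      · exact absurd (Y.edge_vert hy) hsS.2
    · refine degcase t htZ ?_
      intro w hw
      rcases hAdj _ _ hw.adj_sub with hx | hy
      · exact absurd (X.edge_vert hx) htT.2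
      · have hwY : w ∈ Y.verts := Y.edge_vert hy.symm
        by_cases hwX : w ∈ X.verts
        · simpa using hmemuv w hwX hwY
        · exact absurd ⟨t, w, hw, htT, hwY, hwX⟩ h
  exact ⟨⟨⟨s, hsZ, hsS⟩, ⟨t, htZ, htT⟩⟩, ⟨h2u, h2v⟩, h3, h4⟩
end

section
/- For every n ≥ 3 and every finite simple graph G: G → (P3, TKn) if and only if G → (P3, Kn). -/
open SimpleGraph

/-- `F` has a copy in `G`, i.e. `G` has a subgraph isomorphic to `F`. -/
def ContainsCopy {α V : Type*} (F : SimpleGraph α) (G : SimpleGraph V) : Prop :=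
  ∃ f : F →g G, Function.Injective f

/-- `R` is the red subgraph of an `(F,H)`-good red/blue coloring of the edges of `G`. -/
def IsGoodColoring {α β V : Type*} (F : SimpleGraph α) (H : SimpleGraph β)
    (G R : SimpleGraph V) : Prop :=
  R ≤ G ∧ ¬ ContainsCopy F R ∧ ¬ ContainsCopy H (G \ R)

/-- `G → (F, H)`: `G` has no `(F,H)`-good coloring. -/
def Arrows {α β V : Type*} (F : SimpleGraph α) (H : SimpleGraph β) (G : SimpleGraph V) :
    Prop :=
  ¬ ∃ R : SimpleGraph V, IsGoodColoring F H G R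

/-- `TK n` (tailed `K_n`): the complete graph on the `some` vertices of `Option (Fin n)`,
together with the tail vertex `none` joined to exactly one vertex of the clique. -/
def TK (n : ℕ) : SimpleGraph (Option (Fin n)) :=
  SimpleGraph.fromRel fun x y =>
    (x.isSome ∧ y.isSome) ∨ (x = none ∧ ∃ h : 0 < n, y = some ⟨0, h⟩)

lemma p3_free_iff {V : Type*} (R : SimpleGraph V) :
    ¬ ContainsCopy (pathGraph 3) R ↔ ∀ ⦃v x y⦄, R.Adj v x → R.Adj v y → x = y := by
  constructor
  · intro h v x y h1 h2
    by_contra hxy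
    apply h
    have n1 : v ≠ x := h1.ne
    have n2 : v ≠ y := h2.ne
    have hinj : Function.Injective ![x, v, y] := by
      intro i j hij
      fin_cases i <;> fin_cases j <;> simp_all
    refine ⟨⟨![x, v, y], ?_⟩, hinj⟩
    intro i j hij
    fin_cases i <;> fin_cases j <;>
      simp_all [pathGraph_adj] <;>
      first | exact h1.symm | exact h1 | exact h2 | exact h2.symm
  · rintro h ⟨f, hf⟩
    have h01 : (pathGraph 3).Adj 1 0 := by simp [pathGraph_adj]
    have h12 : (pathGraph 3).Adj 1 2 := by simp [pathGraph_adj]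
    have := h (f.map_rel h01) (f.map_rel h12)
    exact absurd (hf this) (by decide)

lemma exists_clique_of_copy {V : Type*} {n : ℕ} {B : SimpleGraph V}
    (h : ContainsCopy (⊤ : SimpleGraph (Fin n)) B) : ∃ s, B.IsNClique n s := by
  classical
  obtain ⟨f, hf⟩ := h
  refine ⟨Finset.univ.image ⇑f, ?_, ?_⟩
  · intro x hx y hy hxy
    simp only [Finset.coe_image, Finset.coe_univ, Set.image_univ, Set.mem_range] at hx hy
    obtain ⟨i, rfl⟩ := hx
    obtain ⟨j, rfl⟩ := hy
    exact f.map_rel (by simpa using fun e => hxy (by rw [e]))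
  · rw [Finset.card_image_of_injective _ hf, Finset.card_univ, Fintype.card_fin]

lemma tk_copy_of {V : Type*} {n : ℕ} (hn0 : 0 < n) {B : SimpleGraph V} {s : Finset V} {t v : V}
    (hs : B.IsNClique n s) (ht : t ∉ s) (hv : v ∈ s) (hadj : B.Adj t v) :
    ContainsCopy (TK n) B := by
  classical
  have hcard : s.card = n := hs.2
  let z : Fin n := ⟨0, hn0⟩
  let q : Fin n ≃ {x // x ∈ s} := (finCongr hcard.symm).trans s.equivFin.symm
  let g : Fin n ≃ {x // x ∈ s} := (Equiv.swap z (q.symm ⟨v, hv⟩)).trans q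
  have hgz : (g z : V) = v := by simp [g, Equiv.swap_apply_left]
  have hmem : ∀ i, (g i : V) ∈ s := fun i => (g i).2
  have hginj : ∀ i j, (g i : V) = (g j : V) → i = j := fun i j e =>
    g.injective (Subtype.ext e)
  have hadjg : ∀ i j, i ≠ j → B.Adj (g i : V) (g j : V) := by
    intro i j hij
    exact hs.1 (hmem i) (hmem j) (fun e => hij (hginj _ _ e))
  refine ⟨⟨fun o => o.elim t (fun i => (g i : V)), ?_⟩, ?_⟩
  · intro x y hxy
    rw [TK, fromRel_adj] at hxy
    obtain ⟨hne, hr⟩ := hxy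
    rcases hr with (⟨hx, hy⟩ | ⟨hx, h0, hy⟩) | (⟨hy, hx⟩ | ⟨hy, h0, hx⟩)
    · obtain ⟨i, rfl⟩ := Option.isSome_iff_exists.mp hx
      obtain ⟨j, rfl⟩ := Option.isSome_iff_exists.mp hy
      exact hadjg i j (fun e => hne (by rw [e]))
    · subst hx; subst hy
      have hz : (⟨0, h0⟩ : Fin n) = z := rfl
      rw [hz]
      simpa [hgz] using hadj
    · obtain ⟨i, rfl⟩ := Option.isSome_iff_exists.mp hx
      obtain ⟨j, rfl⟩ := Option.isSome_iff_exists.mp hy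
      exact hadjg i j (fun e => hne (by rw [e]))
    · subst hy; subst hx
      have hz : (⟨0, h0⟩ : Fin n) = z := rfl
      rw [hz]
      simpa [hgz] using hadj.symm
  · intro o1 o2 h
    match o1, o2 with
    | none, none => rfl
    | none, some i =>
      have h' : t = (g i : V) := h
      exact absurd (h' ▸ hmem i) ht
    | some i, none =>
      have h' : (g i : V) = t := h
      exact absurd (h' ▸ hmem i) ht
    | some i, some j =>
      have h' : (g i : V) = (g j : V) := h
      exact congrArg some (hginj i j h')

lemma kn_copy_of_tk {V : Type*} {n : ℕ} {B : SimpleGraph V}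
    (h : ContainsCopy (TK n) B) : ContainsCopy (⊤ : SimpleGraph (Fin n)) B := by
  obtain ⟨f, hf⟩ := h
  refine ⟨f.comp ⟨some, ?_⟩, hf.comp (Option.some_injective _)⟩
  intro i j hij
  rw [TK, fromRel_adj]
  constructor
  · simpa using hij
  · exact Or.inl (Or.inl ⟨rfl, rfl⟩)


/-- For every `n ≥ 3` and every finite simple graph `G`:
`G → (P3, TKn)` if and only if `G → (P3, Kn)`. -/
theorem stmt6 {V : Type*} [Fintype V] (n : ℕ) (hn : 3 ≤ n) (G : SimpleGraph V) :
    Arrows (SimpleGraph.pathGraph 3) (TK n) G ↔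
      Arrows (SimpleGraph.pathGraph 3) (⊤ : SimpleGraph (Fin n)) G := by
  classical
  constructor
  · rintro h ⟨R, hRG, hP3, hKn⟩
    exact h ⟨R, hRG, hP3, fun hc => hKn (kn_copy_of_tk hc)⟩
  · rintro h ⟨R, hRG, hP3, hTKfree⟩
    apply h
    set B := G \ R with hB
    have hmatch : ∀ ⦃v x y⦄, R.Adj v x → R.Adj v y → x = y := (p3_free_iff R).mp hP3
    have hn0 : 0 < n := by omega
    -- closedness of blue n-cliques
    have hclosed : ∀ ⦃s⦄, B.IsNClique n s → ∀ ⦃u x⦄, u ∈ s → B.Adj u x → x ∈ s := by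
      intro s hs u x hu hadj
      by_contra hx
      exact hTKfree (tk_copy_of hn0 hs hx hu hadj.symm)
    -- choose two distinct vertices in each blue n-clique
    have hpair : ∀ s : Finset V, B.IsNClique n s → ∃ a ∈ s, ∃ b ∈ s, a ≠ b := by
      intro s hs
      exact Finset.one_lt_card.mp (by rw [hs.2]; omega)
    choose a ha b hb hab using hpair
    set U : Set V := {v | ∃ s, B.IsNClique n s ∧ v ∈ s} with hU
    -- two cliques sharing a vertex are equal
    have huniq : ∀ ⦃s s'⦄, B.IsNClique n s → B.IsNClique n s' →
        ∀ ⦃v⦄, v ∈ s → v ∈ s' → s = s' := by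
      intro s s' hs hs' v hv hv'
      have hsub : s' ⊆ s := by
        intro u hu
        by_cases huv : u = v
        · exact huv ▸ hv
        · exact hclosed hs hv (hs'.1 hv' hu (fun e => huv e.symm))
      exact (Finset.eq_of_subset_of_card_le hsub (by rw [hs.2, hs'.2])).symm
    -- the new red graph
    set Adj' : V → V → Prop := fun x y =>
        (R.Adj x y ∧ x ∉ U ∧ y ∉ U) ∨
        (∃ s, ∃ h : B.IsNClique n s, (x = a s h ∧ y = b s h) ∨ (x = b s h ∧ y = a s h))
      with hAdj'
    have hsymm : Symmetric Adj' := by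
      rintro x y (⟨h1, h2, h3⟩ | ⟨s, hs, h⟩)
      · exact Or.inl ⟨h1.symm, h3, h2⟩
      · rcases h with ⟨e1, e2⟩ | ⟨e1, e2⟩
        · exact Or.inr ⟨s, hs, Or.inr ⟨e2, e1⟩⟩
        · exact Or.inr ⟨s, hs, Or.inl ⟨e2, e1⟩⟩
    have hloop : Irreflexive Adj' := by
      rintro x (⟨h1, _, _⟩ | ⟨s, hs, (⟨e1, e2⟩ | ⟨e1, e2⟩)⟩)
      · exact R.irrefl h1
      · exact hab s hs (e1 ▸ e2 ▸ rfl)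
      · exact hab s hs (e2 ▸ e1 ▸ rfl)
    refine ⟨⟨Adj', ⟨fun _ _ h => hsymm h⟩, ⟨fun x => hloop x⟩⟩, ?_, ?_, ?_⟩
    · -- R' ≤ G
      rintro x y (⟨h1, _, _⟩ | ⟨s, hs, (⟨e1, e2⟩ | ⟨e1, e2⟩)⟩)
      · exact hRG h1
      · subst e1; subst e2
        exact (hs.1 (ha s hs) (hb s hs) (hab s hs)).1
      · subst e1; subst e2
        exact (hs.1 (hb s hs) (ha s hs) (Ne.symm (hab s hs))).1
    · -- no red P3
      rw [p3_free_iff]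
      rintro v x y (⟨h1, hv1, hx1⟩ | ⟨s, hs, hp⟩) (⟨h2, hv2, hy2⟩ | ⟨s', hs', hp'⟩)
      · exact hmatch h1 h2
      · exfalso
        apply hv1
        rcases hp' with ⟨e1, _⟩ | ⟨e1, _⟩
        · exact ⟨s', hs', e1 ▸ ha s' hs'⟩
        · exact ⟨s', hs', e1 ▸ hb s' hs'⟩
      · exfalso
        apply hv2
        rcases hp with ⟨e1, _⟩ | ⟨e1, _⟩
        · exact ⟨s, hs, e1 ▸ ha s hs⟩
        · exact ⟨s, hs, e1 ▸ hb s hs⟩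
      · have hvs : v ∈ s := by
          rcases hp with ⟨e1, _⟩ | ⟨e1, _⟩
          · exact e1 ▸ ha s hs
          · exact e1 ▸ hb s hs
        have hvs' : v ∈ s' := by
          rcases hp' with ⟨e1, _⟩ | ⟨e1, _⟩
          · exact e1 ▸ ha s' hs'
          · exact e1 ▸ hb s' hs'
        have hss : s = s' := huniq hs hs' hvs hvs'
        subst hss
        rcases hp with ⟨e1, e2⟩ | ⟨e1, e2⟩ <;> rcases hp' with ⟨e1', e2'⟩ | ⟨e1', e2'⟩
        · rw [e2, e2']
        · exact absurd (e1.symm.trans e1') (hab s hs)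
        · exact absurd (e1'.symm.trans e1) (hab s hs)
        · rw [e2, e2']
    · -- no blue K_n
      intro hcopy
      obtain ⟨t, ht⟩ := exists_clique_of_copy hcopy
      -- each blue' edge is either old-blue or old-red
      have hsplit : ∀ ⦃x y : V⦄, x ∈ t → y ∈ t → x ≠ y →
          B.Adj x y ∨ (R.Adj x y ∧ ¬(x ∉ U ∧ y ∉ U)) := by
        intro x y hx hy hxy
        have hadj := ht.1 hx hy hxy
        have hG : G.Adj x y := hadj.1
        have hnR' := hadj.2
        by_cases hR : R.Adj x y
        · right
          refine ⟨hR, fun hU' => hnR' (Or.inl ⟨hR, hU'⟩)⟩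
        · left
          exact ⟨hG, hR⟩
      by_cases hUt : ∃ u ∈ t, u ∈ U
      · obtain ⟨u, hut, s, hCs, hus⟩ := hUt
        by_cases hts : ∀ x ∈ t, x ∈ s
        · -- t = s, but the chosen edge of s is red
          have hteq : t = s :=
            Finset.eq_of_subset_of_card_le hts (by have h1 := ht.2; have h2 := hCs.2; omega)
          have hadj := ht.1 (x := a s hCs) (y := b s hCs)
            (hteq ▸ ha s hCs) (hteq ▸ hb s hCs) (hab s hCs)
          exact hadj.2 (Or.inr ⟨s, hCs, Or.inl ⟨rfl, rfl⟩⟩)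
        · push_neg at hts
          obtain ⟨w, hwt, hws⟩ := hts
          -- every vertex of t outside s is red-adjacent to u, hence equals w
          have hred : ∀ x ∈ t, x ∉ s → R.Adj u x := by
            intro x hxt hxs
            have hxu : x ≠ u := fun e => hxs (e ▸ hus)
            rcases hsplit hut hxt (Ne.symm hxu) with hBadj | ⟨hRadj, _⟩
            · exact absurd (hclosed hCs hus hBadj) hxs
            · exact hRadj
          have htsub : ∀ x ∈ t, x ∉ s → x = w :=
            fun x hxt hxs => hmatch (hred x hxt hxs) (hred w hwt hws)
          -- two distinct vertices of t in s, both red-adjacent to w : contradiction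
          have hcard2 : 1 < (t.erase w).card := by
            rw [Finset.card_erase_of_mem hwt, ht.2]; omega
          obtain ⟨x1, hx1, x2, hx2, h12⟩ := Finset.one_lt_card.mp hcard2
          have hx1t : x1 ∈ t := Finset.mem_of_mem_erase hx1
          have hx2t : x2 ∈ t := Finset.mem_of_mem_erase hx2
          have hx1s : x1 ∈ s := by
            by_contra hc
            exact (Finset.ne_of_mem_erase hx1) (htsub x1 hx1t hc)
          have hx2s : x2 ∈ s := by
            by_contra hc
            exact (Finset.ne_of_mem_erase hx2) (htsub x2 hx2t hc)
          have hr1 : R.Adj w x1 := by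
            rcases hsplit hwt hx1t (fun e => (Finset.ne_of_mem_erase hx1) e.symm)
              with hBadj | ⟨hRadj, _⟩
            · exact absurd (hclosed hCs hx1s hBadj.symm) hws
            · exact hRadj
          have hr2 : R.Adj w x2 := by
            rcases hsplit hwt hx2t (fun e => (Finset.ne_of_mem_erase hx2) e.symm)
              with hBadj | ⟨hRadj, _⟩
            · exact absurd (hclosed hCs hx2s hBadj.symm) hws
            · exact hRadj
          exact h12 (hmatch hr1 hr2)
      · push_neg at hUt
        have htB : B.IsNClique n t := by
          refine ⟨?_, ht.2⟩
          intro x hx y hy hxy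
          rcases hsplit hx hy hxy with hBadj | ⟨_, hUc⟩
          · exact hBadj
          · exact absurd ⟨hUt x hx, hUt y hy⟩ hUc
        have htne : t.Nonempty := Finset.card_pos.mp (by have h1 := ht.2; omega)
        obtain ⟨u, hu⟩ := htne
        exact hUt u hu ⟨t, htB, hu⟩
end

section
/- Let n ≥ 3 and let G be a finite simple graph in which every edge belongs to some subgraph isomorphic to Kn. Let c be a red/blue coloring of the edges of G whose red subgraph contains no P3. If the blue subgraph of c contains a copy of Kn on a vertex set U, and G has an edge joining a vertex of U to a vertex outside U, then the blue subgraph of c contains a subgraph isomorphic to TKn. -/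
open SimpleGraph

lemma p3_of_two_red {V : Type*} {R : SimpleGraph V} {x y z : V}
    (h1 : R.Adj x y) (h2 : R.Adj y z) (hxz : x ≠ z) :
    ContainsCopy (SimpleGraph.pathGraph 3) R := by
  refine ⟨⟨fun t => if t = 0 then x else if t = 1 then y else z, ?_⟩, ?_⟩
  · intro u w huw
    fin_cases u <;> fin_cases w <;>
      simp_all [pathGraph_adj] <;>
      first | exact h1 | exact h2 | exact h1.symm | exact h2.symm
  · intro u w huw
    fin_cases u <;> fin_cases w <;> simp_all <;>
      first
        | rfl
        | exact absurd huw h1.ne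
        | exact absurd huw h2.ne
        | exact absurd huw hxz
        | exact absurd huw.symm h1.ne
        | exact absurd huw.symm h2.ne
        | exact absurd huw.symm hxz

lemma tk_copy {V : Type*} {n : ℕ} (h0 : 0 < n) {H : SimpleGraph V}
    (f : (⊤ : SimpleGraph (Fin n)) →g H) (hf : Function.Injective f)
    (u : V) (hu : u ∉ Set.range f) (j : Fin n) (hadj : H.Adj (f j) u) :
    ContainsCopy (TK n) H := by
  set σ := Equiv.swap (⟨0, h0⟩ : Fin n) j with hσ
  refine ⟨⟨fun x => x.elim u (fun a => f (σ a)), ?_⟩, ?_⟩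
  · intro x y hxy
    rw [TK, fromRel_adj] at hxy
    obtain ⟨hne, hr⟩ := hxy
    match x, y with
    | some a, some b =>
        have hab : a ≠ b := fun h => hne (by rw [h])
        exact f.map_adj (by simpa using fun h => hab (σ.injective h))
    | none, some b =>
        rcases hr with (⟨h, _⟩ | ⟨_, _, hb⟩) | (⟨_, h⟩ | ⟨h, _⟩)
        · simp at h
        · have hb' : b = ⟨0, h0⟩ := by
            rw [Option.some_inj] at hb; exact Fin.ext (by simp [hb])
          subst hb'
          simpa [hσ, Equiv.swap_apply_left] using hadj.symm
        · simp at h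
        · simp at h
    | some a, none =>
        rcases hr with (⟨_, h⟩ | ⟨h, _⟩) | (⟨h, _⟩ | ⟨_, _, hb⟩)
        · simp at h
        · simp at h
        · simp at h
        · have hb' : a = ⟨0, h0⟩ := by
            rw [Option.some_inj] at hb; exact Fin.ext (by simp [hb])
          subst hb'
          simpa [hσ, Equiv.swap_apply_left] using hadj
    | none, none => exact absurd rfl hne
  · intro x y hxy
    match x, y with
    | some a, some b =>
        simpa using congrArg some (σ.injective (hf hxy))
    | none, some b => exact absurd ⟨_, hxy.symm⟩ hu
    | some a, none => exact absurd ⟨_, hxy⟩ hu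
    | none, none => rfl

/-- Let `n ≥ 3` and let `G` be a finite simple graph in which every edge belongs to some
copy of `K_n`.  Let the coloring be given by its red subgraph `R ≤ G`, whose red part
contains no `P3`.  If the blue subgraph `G \ R` contains a copy of `K_n` (with vertex set
the range of `f`), and `G` has an edge joining a vertex of that copy to a vertex outside
it, then the blue subgraph contains a copy of `TK_n`. -/
theorem stmt7 {V : Type*} [Fintype V] (n : ℕ) (hn : 3 ≤ n) (G : SimpleGraph V)
    (hKn : ∀ e ∈ G.edgeSet, ∃ g : (⊤ : SimpleGraph (Fin n)) →g G,
      Function.Injective g ∧ ∃ a b : Fin n, a ≠ b ∧ e = s(g a, g b))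
    (R : SimpleGraph V) (hRG : R ≤ G)
    (hred : ¬ ContainsCopy (SimpleGraph.pathGraph 3) R)
    (f : (⊤ : SimpleGraph (Fin n)) →g (G \ R)) (hf : Function.Injective f)
    (v : V) (hv : v ∉ Set.range f) (i : Fin n) (hadj : G.Adj (f i) v) :
    ContainsCopy (TK n) (G \ R) := by
  classical
  have h0 : 0 < n := by omega
  by_cases hRiv : R.Adj (f i) v
  · -- edge (f i, v) is red
    obtain ⟨g, hg, a, b, hab, he⟩ := hKn s(f i, v) (G.mem_edgeSet.2 hadj)
    rw [Sym2.eq_iff] at he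
    -- normalize: get a', b' with g a' = f i, g b' = v
    obtain ⟨a, b, hab, ha, hb⟩ :
        ∃ a b : Fin n, a ≠ b ∧ g a = f i ∧ g b = v := by
      rcases he with ⟨ha, hb⟩ | ⟨ha, hb⟩
      · exact ⟨a, b, hab, ha.symm, hb.symm⟩
      · exact ⟨b, a, hab.symm, ha.symm, hb.symm⟩
    obtain ⟨c, hca, hcb⟩ : ∃ c : Fin n, c ≠ a ∧ c ≠ b := by
      have hne : (({a, b} : Finset (Fin n))ᶜ).Nonempty := by
        rw [← Finset.card_pos, Finset.card_compl]
        have : ({a, b} : Finset (Fin n)).card ≤ 2 :=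
          Finset.card_insert_le _ _ |>.trans (by simp)
        simp only [Fintype.card_fin]; omega
      obtain ⟨c, hc⟩ := hne
      simp only [Finset.mem_compl, Finset.mem_insert, Finset.mem_singleton, not_or] at hc
      exact ⟨c, hc.1, hc.2⟩
    have hgcfi : g c ≠ f i := fun h => hca (hg (h.trans ha.symm))
    have hgcv : g c ≠ v := fun h => hcb (hg (h.trans hb.symm))
    have hGcfi : G.Adj (g c) (f i) := ha ▸ g.map_adj (by simpa using hca)
    have hGcv : G.Adj (g c) v := hb ▸ g.map_adj (by simpa using hcb)
    have hBcfi : ¬ R.Adj (g c) (f i) := fun h =>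
      hred (p3_of_two_red h hRiv hgcv)
    have hBcv : ¬ R.Adj (g c) v := fun h =>
      hred (p3_of_two_red hRiv h.symm hgcfi.symm)
    by_cases hrange : g c ∈ Set.range f
    · obtain ⟨j, hj⟩ := hrange
      exact tk_copy h0 f hf v hv j (by rw [hj]; exact ⟨hGcv, hBcv⟩)
    · exact tk_copy h0 f hf (g c) hrange i ⟨hGcfi.symm, fun h => hBcfi h.symm⟩
  · exact tk_copy h0 f hf v hv i ⟨hadj, hRiv⟩
end

section
/- Let e = (u,v) be any edge of J4, and let A be a graph that is the union of two subgraphs X and Y, each isomorphic to J4, with V(X) ∩ V(Y) = {u,v} and E(X) ∩ E(Y) = {(u,v)} (i.e., A is obtained from two disjoint copies of J4 by identifying the edge e of each copy). Then A contains a subgraph isomorphic to J4 that is distinct from both X and Y. -/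
open SimpleGraph
lemma J4adj (a b : Fin 4) : J4.Adj a b ↔ a ≠ b ∧ ¬(a = 0 ∧ b = 1) ∧ ¬(a = 1 ∧ b = 0) := by
  simp [J4, Sym2.eq_iff]; tauto

lemma common (u v : Fin 4) (h : J4.Adj u v) : ∃ w, J4.Adj u w ∧ J4.Adj v w := by
  simp only [J4adj] at *
  fin_cases u <;> fin_cases v <;> simp_all <;> decide

/-- Let `(u,v)` be any edge of `J4` and let `A` be the union of two subgraphs `X` and
`Y`, each isomorphic to `J4` via isomorphisms matching `u` and `v` on the two shared
vertices, with `V(X) ∩ V(Y) = {u,v}` and `E(X) ∩ E(Y) = {(u,v)}` (i.e. `A` is obtained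
from two disjoint copies of `J4` by identifying the edge `(u,v)` of each copy).
Then `A` contains a subgraph isomorphic to `J4` distinct from both `X` and `Y`. -/
theorem stmt13 (u v : Fin 4) (huv : J4.Adj u v)
    {W : Type*} (A : SimpleGraph W) (X Y : A.Subgraph)
    (φ : J4 ≃g X.coe) (ψ : J4 ≃g Y.coe)
    (hunion : X ⊔ Y = ⊤)
    (hu : (↑(φ u) : W) = (↑(ψ u) : W))
    (hv : (↑(φ v) : W) = (↑(ψ v) : W))
    (hverts : X.verts ∩ Y.verts = {(↑(φ u) : W), (↑(φ v) : W)})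
    (hedges : X.edgeSet ∩ Y.edgeSet = {s((↑(φ u) : W), (↑(φ v) : W))}) :
    ∃ Z : A.Subgraph, Nonempty (Z.coe ≃g J4) ∧ Z ≠ X ∧ Z ≠ Y := by
  obtain ⟨w, hw1, hw2⟩ := common u v huv
  -- adjacency transfer
  have hAX : ∀ a b : Fin 4, J4.Adj a b → A.Adj ↑(φ a) ↑(φ b) := fun a b h =>
    X.adj_sub (φ.map_rel_iff.mpr h)
  have hAY : ∀ a b : Fin 4, J4.Adj a b → A.Adj ↑(ψ a) ↑(ψ b) := fun a b h =>
    Y.adj_sub (ψ.map_rel_iff.mpr h)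
  have hXv : ∀ a : Fin 4, (↑(φ a) : W) ∈ X.verts := fun a => (φ a).2
  have hYv : ∀ a : Fin 4, (↑(ψ a) : W) ∈ Y.verts := fun a => (ψ a).2
  set f : Fin 4 → W := ![↑(φ w), ↑(ψ w), ↑(φ u), ↑(φ v)] with hf
  -- distinctness
  have hwu : w ≠ u := (J4.ne_of_adj hw1).symm
  have hwv : w ≠ v := (J4.ne_of_adj hw2).symm
  have hφinj : ∀ a b : Fin 4, (↑(φ a) : W) = ↑(φ b) → a = b := fun a b h =>
    φ.injective (Subtype.ext h)
  have hψinj : ∀ a b : Fin 4, (↑(ψ a) : W) = ↑(ψ b) → a = b := fun a b h =>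
    ψ.injective (Subtype.ext h)
  have hyX : (↑(ψ w) : W) ∉ X.verts := by
    intro h
    have : (↑(ψ w) : W) ∈ ({(↑(φ u) : W), (↑(φ v) : W)} : Set W) := by
      rw [← hverts]; exact ⟨h, hYv w⟩
    rcases this with h' | h'
    · exact hwu (hψinj w u (h'.trans hu))
    · exact hwv (hψinj w v (h'.trans hv))
  have hxY : (↑(φ w) : W) ∉ Y.verts := by
    intro h
    have : (↑(φ w) : W) ∈ ({(↑(φ u) : W), (↑(φ v) : W)} : Set W) := by
      rw [← hverts]; exact ⟨hXv w, h⟩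
    rcases this with h' | h'
    · exact hwu (hφinj w u h')
    · exact hwv (hφinj w v h')
  have hxy : (↑(φ w) : W) ≠ ↑(ψ w) := fun h => hxY (by rw [h]; exact hYv w)
  have h01 : f 0 ≠ f 1 := hxy
  have h02 : f 0 ≠ f 2 := fun h => hwu (hφinj w u h)
  have h03 : f 0 ≠ f 3 := fun h => hwv (hφinj w v h)
  have h12 : f 1 ≠ f 2 := fun h => hwu (hψinj w u (h.trans hu))
  have h13 : f 1 ≠ f 3 := fun h => hwv (hψinj w v (h.trans hv))
  have h23 : f 2 ≠ f 3 := fun h => huv.ne (hφinj u v h)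
  have hfinj : Function.Injective f := by
    intro a b hab
    fin_cases a <;> fin_cases b <;>
      first
      | rfl
      | exact absurd hab h01 | exact absurd hab.symm h01
      | exact absurd hab h02 | exact absurd hab.symm h02
      | exact absurd hab h03 | exact absurd hab.symm h03
      | exact absurd hab h12 | exact absurd hab.symm h12
      | exact absurd hab h13 | exact absurd hab.symm h13
      | exact absurd hab h23 | exact absurd hab.symm h23
  -- f maps J4 edges to A edges
  have hhom : ∀ i j : Fin 4, J4.Adj i j → A.Adj (f i) (f j) := by
    have e02 : A.Adj (f 0) (f 2) := hAX w u hw1.symm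
    have e03 : A.Adj (f 0) (f 3) := hAX w v hw2.symm
    have e12 : A.Adj (f 1) (f 2) := by
      have h := hAY w u hw1.symm; rwa [← hu] at h
    have e13 : A.Adj (f 1) (f 3) := by
      have h := hAY w v hw2.symm; rwa [← hv] at h
    have e23 : A.Adj (f 2) (f 3) := hAX u v huv
    intro i j hij
    have hd := (by simp only [J4adj]; decide : ∀ i j : Fin 4, J4.Adj i j →
      (i = 0 ∧ j = 2) ∨ (i = 2 ∧ j = 0) ∨ (i = 0 ∧ j = 3) ∨ (i = 3 ∧ j = 0) ∨
      (i = 1 ∧ j = 2) ∨ (i = 2 ∧ j = 1) ∨ (i = 1 ∧ j = 3) ∨ (i = 3 ∧ j = 1) ∨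
      (i = 2 ∧ j = 3) ∨ (i = 3 ∧ j = 2)) i j hij
    rcases hd with ⟨rfl, rfl⟩|⟨rfl, rfl⟩|⟨rfl, rfl⟩|⟨rfl, rfl⟩|⟨rfl, rfl⟩|⟨rfl, rfl⟩|
      ⟨rfl, rfl⟩|⟨rfl, rfl⟩|⟨rfl, rfl⟩|⟨rfl, rfl⟩
    · exact e02
    · exact e02.symm
    · exact e03
    · exact e03.symm
    · exact e12
    · exact e12.symm
    · exact e13
    · exact e13.symm
    · exact e23
    · exact e23.symm
  set Z : A.Subgraph :=
    { verts := Set.range f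
      Adj := fun a b => ∃ i j, J4.Adj i j ∧ f i = a ∧ f j = b
      adj_sub := by rintro a b ⟨i, j, hij, rfl, rfl⟩; exact hhom i j hij
      edge_vert := by rintro a b ⟨i, j, hij, rfl, rfl⟩; exact ⟨i, rfl⟩
      symm := ⟨by rintro a b ⟨i, j, hij, rfl, rfl⟩; exact ⟨j, i, hij.symm, rfl, rfl⟩⟩ }
    with hZ
  have hfbij : Function.Bijective (fun i : Fin 4 => (⟨f i, ⟨i, rfl⟩⟩ : Z.verts)) := by
    constructor
    · intro a b h; exact hfinj (congrArg Subtype.val h)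
    · rintro ⟨a, i, rfl⟩; exact ⟨i, rfl⟩
  refine ⟨Z, ⟨?_⟩, ?_, ?_⟩
  · refine ((⟨Equiv.ofBijective _ hfbij, ?_⟩ : J4 ≃g Z.coe)).symm
    intro i j
    show Z.Adj (f i) (f j) ↔ J4.Adj i j
    constructor
    · rintro ⟨i', j', hij, hi, hj⟩
      rwa [hfinj hi, hfinj hj] at hij
    · intro h; exact ⟨i, j, h, rfl, rfl⟩
  · intro h
    apply hyX
    have hm : (↑(ψ w) : W) ∈ Z.verts := ⟨1, rfl⟩
    rwa [h] at hm
  · intro h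
    apply hxY
    have hm : (↑(φ w) : W) ∈ Z.verts := ⟨0, rfl⟩
    rwa [h] at hm
end
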